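/- arXiv:1707.00658 — 8 statements merged into one kernel-verified Lean document; each statement's English description precedes it below -/
import Mathlib

section
/- Let D be a division ring with center F and K a subfield of D containing F. If a ∈ D is such that dim_K K[a] ≥ n, then for any n distinct elements α₁,…,αₙ of F with each a − αᵢ invertible, the elements (a−α₁)⁻¹, …, (a−αₙ)⁻¹ are linearly independent over K. -/
open Polynomial

/-- Powers of `a` are linearly independent over `K` when the span of all powers has rank ≥ n. -/
private lemma aux_pow_li (D : Type u) [DivisionRing D] (K : Subfield D) (a : D) (n : ℕ)
    (hdim : (n : Cardinal) ≤ Module.rank K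
      (Submodule.span K {x : D | ∃ k : ℕ, x = a ^ k})) :
    LinearIndependent K (fun i : Fin n => a ^ (i : ℕ)) := by
  classical
  by_contra h
  obtain ⟨g, hsum, i0, hi0⟩ := Fintype.not_linearIndependent_iff.mp h
  set s : Finset (Fin n) := Finset.univ.filter (fun i => g i ≠ 0) with hs
  have hi0s : i0 ∈ s := by simp [hs, hi0]
  set m : Fin n := s.max' ⟨i0, hi0s⟩ with hm
  have hms : m ∈ s := s.max'_mem _
  have hgm : g m ≠ 0 := by simpa [hs] using hms
  set W : Submodule K D :=
    Submodule.span K (Set.range (fun i : ULift.{u} (Fin (m : ℕ)) => a ^ (i.down : ℕ))) with hW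
  have hgen : ∀ k : ℕ, k < (m : ℕ) → a ^ k ∈ W := fun k hk =>
    Submodule.subset_span ⟨⟨⟨k, hk⟩⟩, rfl⟩
  have hmW : a ^ (m : ℕ) ∈ W := by
    have h1 : g m • a ^ ((m : Fin n) : ℕ) =
        -∑ i ∈ Finset.univ.erase m, g i • a ^ (i : ℕ) := by
      have h0 := Finset.add_sum_erase Finset.univ
        (fun i : Fin n => g i • a ^ (i : ℕ)) (Finset.mem_univ m)
      exact eq_neg_iff_add_eq_zero.mpr (h0.trans hsum)
    have h2 : (∑ i ∈ Finset.univ.erase m, g i • a ^ (i : ℕ)) ∈ W := by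
      refine Submodule.sum_mem _ fun i hi => ?_
      by_cases hgi : g i = 0
      · simp [hgi]
      · have his : i ∈ s := by simp [hs, hgi]
        have hle : i ≤ m := s.le_max' i his
        have hine : i ≠ m := (Finset.mem_erase.mp hi).1
        have hilt : (i : ℕ) < (m : ℕ) := by
          refine lt_of_le_of_ne ?_ ?_
          · exact_mod_cast hle
          · exact fun h' => hine (Fin.ext h')
        exact Submodule.smul_mem _ _ (hgen _ hilt)
    have h3 : a ^ ((m : Fin n) : ℕ) = (g m)⁻¹ • (g m • a ^ ((m : Fin n) : ℕ)) := by
      rw [inv_smul_smul₀ hgm]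
    rw [h3, h1]
    exact Submodule.smul_mem _ _ (Submodule.neg_mem _ h2)
  have hmul : ∀ x ∈ W, x * a ∈ W := by
    intro x hx
    induction hx using Submodule.span_induction with
    | mem x hx =>
      obtain ⟨⟨⟨j, hj⟩⟩, rfl⟩ := hx
      simp only
      rw [← pow_succ]
      rcases lt_or_eq_of_le (Nat.succ_le_of_lt hj) with h' | h'
      · exact hgen _ h'
      · rw [show j + 1 = (m : ℕ) from h']; exact hmW
    | zero => simp
    | add x y hx hy ihx ihy => rw [add_mul]; exact Submodule.add_mem _ ihx ihy
    | smul c x hx ihx => rw [smul_mul_assoc]; exact Submodule.smul_mem _ _ ihx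
  have hall : ∀ k : ℕ, a ^ k ∈ W := by
    intro k
    induction k with
    | zero =>
      rcases Nat.eq_zero_or_pos (m : ℕ) with h0 | h0
      · have : a ^ ((m : Fin n) : ℕ) = a ^ 0 := by rw [h0]
        rw [← this]; exact hmW
      · exact hgen 0 h0
    | succ k ih => rw [pow_succ]; exact hmul _ ih
  have hle : Submodule.span K {x : D | ∃ k : ℕ, x = a ^ k} ≤ W := by
    rw [Submodule.span_le]
    rintro x ⟨k, rfl⟩
    exact hall k
  have h1 : (n : Cardinal) ≤ Module.rank K W := hdim.trans (Submodule.rank_mono hle)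
  have h2 := h1.trans (rank_span_le _)
  have h3 : (n : Cardinal) ≤ ((m : ℕ) : Cardinal) := by
    refine h2.trans ((Cardinal.mk_range_le).trans ?_)
    rw [Cardinal.mk_fintype]
    simp
  exact absurd (Nat.cast_le.mp h3) (Nat.not_le.mpr m.isLt)

/-- Rowen's lemma: if `dim_K K[a] ≥ n`, then for distinct central `α₁, …, αₙ` with each
`a - αᵢ ≠ 0`, the inverses `(a - αᵢ)⁻¹` are linearly independent over `K`. -/
theorem stmt_1 (D : Type*) [DivisionRing D] (K : Subfield D)
    (hFK : ∀ z ∈ Subring.center D, z ∈ K)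
    (a : D) (n : ℕ)
    (hdim : (n : Cardinal) ≤ Module.rank K
      (Submodule.span K {x : D | ∃ k : ℕ, x = a ^ k}))
    (α : Fin n → Subring.center D) (hinj : Function.Injective α)
    (hne : ∀ i, a - (α i : D) ≠ 0) :
    LinearIndependent K (fun i : Fin n => (a - (α i : D))⁻¹) := by
  classical
  have hinj' : Set.InjOn α ↑(Finset.univ : Finset (Fin n)) := fun i _ j _ h => hinj h
  set q : Fin n → Polynomial (Subring.center D) :=
    fun i => ∏ j ∈ Finset.univ.erase i, (X - C (α j)) with hq
  set P : Polynomial (Subring.center D) := ∏ j, (X - C (α j)) with hP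
  set p : Fin n → D := fun i => aeval a (q i) with hp
  set T : D := aeval a P with hT
  -- factorization
  have hfact : ∀ i, (a - (α i : D))⁻¹ * T = p i := by
    intro i
    have hPi : P = (X - C (α i)) * q i :=
      (Finset.mul_prod_erase _ _ (Finset.mem_univ i)).symm
    rw [hT, hPi, map_mul, map_sub, aeval_X, aeval_C]
    exact inv_mul_cancel_left₀ (hne i) _
  -- basis polynomials
  have hbasis : ∀ i, Lagrange.basis Finset.univ α i =
      C (∏ j ∈ Finset.univ.erase i, (α i - α j)⁻¹) * q i := by
    intro i
    rw [Lagrange.basis, hq, map_prod, ← Finset.prod_mul_distrib]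
    rfl
  -- each power a^k (k < n) is in the K-span of the p i
  have hpow_mem : ∀ k : ℕ, k < n → a ^ k ∈ Submodule.span K (Set.range p) := by
    intro k hk
    have hdeg : (X ^ k : Polynomial (Subring.center D)).degree <
        ((Finset.univ : Finset (Fin n)).card : ℕ) := by
      rw [degree_X_pow, Finset.card_univ, Fintype.card_fin]
      exact_mod_cast hk
    have hinterp := Lagrange.eq_interpolate hinj' hdeg
    rw [Lagrange.interpolate_apply] at hinterp
    have hev := congrArg (aeval a) hinterp
    rw [map_pow, aeval_X, map_sum] at hev
    rw [hev]
    refine Submodule.sum_mem _ fun i _ => ?_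
    rw [hbasis i, ← mul_assoc, ← map_mul, map_mul, aeval_C]
    set z : Subring.center D :=
      eval (α i) (X ^ k) * ∏ j ∈ Finset.univ.erase i, (α i - α j)⁻¹ with hz
    have hzK : (z : D) ∈ K := hFK _ z.2
    have : (algebraMap (Subring.center D) D z) * aeval a (q i)
        = (⟨(z : D), hzK⟩ : K) • p i := rfl
    rw [this]
    exact Submodule.smul_mem _ _ (Submodule.subset_span ⟨i, rfl⟩)
  -- the p i are linearly independent
  have hLIpow := aux_pow_li D K a n hdim
  have hle : Submodule.span K (Set.range fun i : Fin n => a ^ (i : ℕ)) ≤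
      Submodule.span K (Set.range p) := by
    rw [Submodule.span_le]
    rintro x ⟨i, rfl⟩
    exact hpow_mem i i.isLt
  have hfd : FiniteDimensional K (Submodule.span K (Set.range p)) :=
    FiniteDimensional.span_of_finite K (Set.finite_range p)
  have hcard1 : n = Set.finrank K (Set.range fun i : Fin n => a ^ (i : ℕ)) := by
    have := linearIndependent_iff_card_eq_finrank_span.mp hLIpow
    simpa using this
  have hge : n ≤ Set.finrank K (Set.range p) :=
    le_trans (le_of_eq hcard1) (Submodule.finrank_mono hle)
  have hlecard : Set.finrank K (Set.range p) ≤ n := by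
    have := finrank_range_le_card (R := ↥K) p
    simpa using this
  have hLIp : LinearIndependent K p := by
    rw [linearIndependent_iff_card_eq_finrank_span]
    rw [Fintype.card_fin]
    exact le_antisymm hge hlecard
  -- conclude via right multiplication by T
  let ρ : D →ₗ[K] D :=
    { toFun := fun x => x * T
      map_add' := fun x y => add_mul x y T
      map_smul' := fun c x => smul_mul_assoc c x T }
  have hcomp : ⇑ρ ∘ (fun i : Fin n => (a - (α i : D))⁻¹) = p :=
    funext fun i => hfact i
  exact LinearIndependent.of_comp ρ (hcomp ▸ hLIp)
end

section
/- Let D be a non-commutative division ring algebraic over its center F. Then T(D), the F-span of all multiplicative commutators, is a Lie ideal of D: for all a ∈ D and x ∈ T(D), the additive commutator ax − xa lies in T(D). -/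
open Polynomial


lemma eigen_extract {K : Type*} [Field K] {M : Type*} [AddCommGroup M] [Module K M]
    (f : M →ₗ[K] M) (s : Finset K) (y : M) (hy : y ≠ 0)
    (h : (Polynomial.aeval f (∏ c ∈ s, (X - C c))) y = 0) :
    ∃ c ∈ s, ∃ b : M, b ≠ 0 ∧ f b = c • b := by
  classical
  induction s using Finset.cons_induction generalizing y with
  | empty => simp at h; exact absurd h hy
  | cons c₀ s' hc₀ ih =>
    rw [Finset.prod_cons, map_mul] at h
    set B := Polynomial.aeval f (∏ c ∈ s', (X - C c)) with hB
    by_cases hBy : B y = 0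
    · obtain ⟨c, hc, b, hb⟩ := ih y hy hBy
      exact ⟨c, Finset.mem_cons_of_mem hc, b, hb⟩
    · refine ⟨c₀, Finset.mem_cons_self _ _, B y, hBy, ?_⟩
      have h2 : (Polynomial.aeval f (X - C c₀)) (B y) = 0 := by
        rw [← Module.End.mul_apply]; exact h
      rw [map_sub, aeval_X, aeval_C, LinearMap.sub_apply,
        Module.algebraMap_end_apply] at h2
      exact sub_eq_zero.mp h2

lemma prod_X_sub_C_univ (K : Type*) [Field K] [Fintype K] :
    ∏ c : K, (X - C c) = X ^ (Fintype.card K) - X := by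
  have hcard2 := Fintype.one_lt_card (α := K)
  obtain ⟨m, hm⟩ : ∃ m, Fintype.card K = m + 1 := ⟨Fintype.card K - 1, by omega⟩
  have hm1 : 1 ≤ m := by omega
  have hmon : (X ^ (Fintype.card K) - X : K[X]).Monic := by
    apply Polynomial.monic_X_pow_sub
    calc (X : K[X]).degree ≤ 1 := degree_X_le
    _ < ((Fintype.card K : ℕ) : WithBot ℕ) := by exact_mod_cast hcard2
  have hdeg := FiniteField.X_pow_card_sub_X_natDegree_eq K (Fintype.one_lt_card (α := K))
  have hroots := FiniteField.roots_X_pow_card_sub_X K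
  have hcard : Multiset.card (X ^ (Fintype.card K) - X : K[X]).roots
      = (X ^ (Fintype.card K) - X : K[X]).natDegree := by
    rw [hroots, hdeg]; simp
  have := prod_multiset_X_sub_C_of_monic_of_roots_card_eq hmon hcard
  rw [hroots] at this
  rw [← this, Finset.prod_eq_multiset_prod]

section Aux
variable {D : Type*} [DivisionRing D]

local notation "F" => Subring.center D

lemma csmul (r : Subring.center D) (x : D) : r • x = (r : D) * x := rfl

lemma amap (r : Subring.center D) : algebraMap F D r = (r : D) := rfl

lemma ccomm (r : Subring.center D) (x : D) : x * (r : D) = (r : D) * x :=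
  (Subring.mem_center_iff.mp r.2 x)

variable (c : D)

/-- powers span -/
noncomputable def Vpow (n : ℕ) : Submodule F D :=
  Submodule.span F (Set.range fun i : Fin n => c ^ (i : ℕ))

lemma aeval_mem_Vpow {n : ℕ} (p : F[X]) (hp : p.natDegree < n) :
    aeval c p ∈ Vpow c n := by
  rw [aeval_eq_sum_range' hp]
  refine Submodule.sum_mem _ fun i hi => Submodule.smul_mem _ _ ?_
  exact Submodule.subset_span ⟨⟨i, Finset.mem_range.mp hi⟩, rfl⟩

lemma pow_n_mem_Vpow (hc : IsIntegral F c) :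
    c ^ (minpoly F c).natDegree ∈ Vpow c (minpoly F c).natDegree := by
  set m := minpoly F c with hm
  have hmon : m.Monic := minpoly.monic hc
  have hpos : 0 < m.natDegree := minpoly.natDegree_pos hc
  have h0 : aeval c m = 0 := minpoly.aeval F c
  have hsplit : m.eraseLead + C m.leadingCoeff * X ^ m.natDegree = m :=
    eraseLead_add_C_mul_X_pow m
  have : aeval c m.eraseLead + c ^ m.natDegree = 0 := by
    have := congrArg (aeval c) hsplit
    rw [map_add, map_mul, map_pow, aeval_X, aeval_C, hmon.leadingCoeff, map_one,
      one_mul, h0] at this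
    exact this
  have hc' : c ^ m.natDegree = -(aeval c m.eraseLead) := eq_neg_of_add_eq_zero_right this
  rw [hc']
  refine neg_mem (aeval_mem_Vpow c _ ?_)
  have := eraseLead_natDegree_le m
  omega

lemma mul_c_mem_Vpow (hc : IsIntegral F c) {v : D}
    (hv : v ∈ Vpow c (minpoly F c).natDegree) : c * v ∈ Vpow c (minpoly F c).natDegree := by
  set n := (minpoly F c).natDegree with hn
  have hpos : 0 < n := minpoly.natDegree_pos hc
  refine Submodule.span_induction ?_ ?_ ?_ ?_ hv
  · rintro x ⟨⟨i, hi⟩, rfl⟩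
    simp only
    rw [← pow_succ']
    rcases Nat.lt_or_ge (i+1) n with h | h
    · exact Submodule.subset_span ⟨⟨i+1, h⟩, rfl⟩
    · have : i + 1 = n := by omega
      rw [this]
      exact pow_n_mem_Vpow c hc
  · simpa using Submodule.zero_mem _
  · intro x y _ _ hx hy
    rw [mul_add]; exact Submodule.add_mem _ hx hy
  · intro r x _ hx
    rw [csmul, ← mul_assoc, ccomm, mul_assoc, ← csmul]
    exact Submodule.smul_mem _ _ hx

lemma pow_mul_mem_Vpow (hc : IsIntegral F c) (j : ℕ) {v : D}
    (hv : v ∈ Vpow c (minpoly F c).natDegree) : c ^ j * v ∈ Vpow c (minpoly F c).natDegree := by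
  induction j with
  | zero => simpa using hv
  | succ k ih =>
    rw [pow_succ', mul_assoc]
    exact mul_c_mem_Vpow c hc ih

lemma one_mem_Vpow (hc : IsIntegral F c) : (1 : D) ∈ Vpow c (minpoly F c).natDegree := by
  have hpos : 0 < (minpoly F c).natDegree := minpoly.natDegree_pos hc
  exact Submodule.subset_span ⟨⟨0, hpos⟩, by simp⟩

lemma mul_mem_Vpow (hc : IsIntegral F c) {v w : D}
    (hv : v ∈ Vpow c (minpoly F c).natDegree) (hw : w ∈ Vpow c (minpoly F c).natDegree) :
    v * w ∈ Vpow c (minpoly F c).natDegree := by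
  refine Submodule.span_induction ?_ ?_ ?_ ?_ hv
  · rintro x ⟨⟨i, hi⟩, rfl⟩
    exact pow_mul_mem_Vpow c hc i hw
  · simpa using Submodule.zero_mem _
  · intro x y _ _ hx hy
    rw [add_mul]; exact Submodule.add_mem _ hx hy
  · intro r x _ hx
    rw [csmul, mul_assoc, ← csmul]
    exact Submodule.smul_mem _ _ hx

/-- The subring `F[c]`. -/
noncomputable def VpowSubring (hc : IsIntegral F c) : Subring D where
  carrier := Vpow c (minpoly F c).natDegree
  mul_mem' := mul_mem_Vpow c hc
  one_mem' := one_mem_Vpow c hc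
  add_mem' := Submodule.add_mem _
  zero_mem' := Submodule.zero_mem _
  neg_mem' := Submodule.neg_mem _

lemma finite_Vpow [Finite F] (n : ℕ) : Finite (Vpow c n) := by
  haveI : FiniteDimensional F (Vpow c n) :=
    FiniteDimensional.span_of_finite F (Set.finite_range _)
  exact Module.finite_of_finite F

lemma closure_finite [Finite F] {c : D} (hc : IsIntegral F c) :
    Finite (Subring.closure ((F : Set D) ∪ {c})) := by
  haveI := finite_Vpow c (minpoly F c).natDegree
  have hle : Subring.closure ((F : Set D) ∪ {c}) ≤ VpowSubring c hc := by
    rw [Subring.closure_le]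
    rintro x (hx | rfl)
    · have : x = (⟨x, hx⟩ : F) • (1 : D) := by rw [csmul, mul_one]
      rw [this]
      exact Submodule.smul_mem _ _ (one_mem_Vpow c hc)
    · have h2 := mul_c_mem_Vpow x hc (one_mem_Vpow x hc)
      rwa [mul_one] at h2
  have hfin : ((Vpow c (minpoly F c).natDegree : Submodule F D) : Set D).Finite :=
    Set.toFinite _
  exact (hfin.subset hle).to_subtype

lemma add_central_ne_zero {a : D} (ha' : a ∉ F) (r : F) : a + (r : D) ≠ 0 := by
  intro h
  have h2 : a = -(r : D) := eq_neg_of_add_eq_zero_left h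
  rw [h2] at ha'
  exact ha' (Subring.neg_mem _ r.2)

lemma inv_add_mem_Vpow {a : D} (ha : IsIntegral F a) (ha' : a ∉ F) (r : F) :
    (a + (r : D))⁻¹ ∈ Vpow a (minpoly F a).natDegree := by
  set n := (minpoly F a).natDegree with hn
  have hpos : 0 < n := minpoly.natDegree_pos ha
  set m := minpoly F a with hm
  set b := a + (r : D) with hb
  have hbne : b ≠ 0 := add_central_ne_zero ha' r
  set pb := m.comp (X - C r) with hpb
  have haevalXC : aeval b (X - C r) = a := by
    rw [map_sub, aeval_X, aeval_C, amap, hb]; abel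
  have hpb0 : aeval b pb = 0 := by
    rw [hpb, aeval_comp, haevalXC, hm]
    exact minpoly.aeval F a
  have hnd : pb.natDegree = n := by
    rw [hpb, natDegree_comp, natDegree_X_sub_C, mul_one]
  have hc0 : pb.coeff 0 ≠ 0 := by
    intro h
    rw [coeff_zero_eq_eval_zero, eval_comp] at h
    have hroot : m.IsRoot (eval 0 (X - C r)) := h
    have : eval 0 (X - C r) = -r := by simp
    rw [this] at hroot
    obtain ⟨g, hg⟩ := dvd_iff_isRoot.mpr hroot
    have hgne : g ≠ 0 := by
      rintro rfl
      rw [mul_zero] at hg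
      exact minpoly.ne_zero ha hg
    have hag : aeval a g = 0 := by
      have := minpoly.aeval F a
      rw [← hm, hg, map_mul, map_sub, aeval_X, aeval_C, amap] at this
      have hfac : a - ((-r : F) : D) = b := by rw [hb]; push_cast; abel
      rw [hfac] at this
      exact (mul_eq_zero.mp this).resolve_left hbne
    have hle := minpoly.degree_le_of_ne_zero F a hgne hag
    have h1 : m.natDegree ≤ g.natDegree := natDegree_le_natDegree hle
    have h2 : m.natDegree = 1 + g.natDegree := by
      rw [hg, natDegree_mul (X_sub_C_ne_zero (-r)) hgne, natDegree_X_sub_C]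
    omega
  set q := pb.divX with hq
  have hqsplit : X * q + C (pb.coeff 0) = pb := X_mul_divX_add pb
  have hqdeg : q.natDegree < n := by
    by_cases hq0 : q = 0
    · rw [hq0]; simpa using hpos
    · have hXq : (X * q).natDegree = 1 + q.natDegree := by
        rw [natDegree_mul X_ne_zero hq0, natDegree_X]
      have h1 : (X * q + C (pb.coeff 0)).natDegree = (X * q).natDegree :=
        natDegree_add_C
      rw [hqsplit, hnd] at h1
      omega
  have hkey : b * aeval b q = ((-(pb.coeff 0) : F) : D) := by
    have h3 := congrArg (aeval b) hqsplit
    rw [map_add, map_mul, aeval_X, aeval_C, amap, hpb0] at h3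
    have h4 := eq_neg_of_add_eq_zero_left h3
    rw [h4]; push_cast; abel
  set s : F := -(pb.coeff 0)⁻¹ with hs
  have hsc : s * (-(pb.coeff 0)) = 1 := by
    rw [hs]; field_simp
  have hmul : b * (s • aeval b q) = 1 := by
    rw [csmul, ← mul_assoc, ccomm, mul_assoc, ← csmul, hkey, csmul]
    exact_mod_cast hsc
  have hinv : b⁻¹ = s • aeval b q := inv_eq_of_mul_eq_one_right hmul
  rw [hinv, ← map_smul]
  set q' := s • q with hq'
  have haevalXC' : aeval a (X + C r) = b := by
    rw [map_add, aeval_X, aeval_C, amap]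
  have hcomp : aeval a (q'.comp (X + C r)) = aeval b q' := by
    rw [aeval_comp, haevalXC']
  rw [← hcomp]
  apply aeval_mem_Vpow
  calc (q'.comp (X + C r)).natDegree = q'.natDegree * (X + C r).natDegree := natDegree_comp
  _ ≤ q.natDegree * 1 := by
      rw [natDegree_X_add_C]
      exact Nat.mul_le_mul_right 1 (natDegree_smul_le s q)
  _ < n := by omega

lemma one_mem_inv_span [Infinite F] {a : D} (ha : IsIntegral F a) (ha' : a ∉ F) :
    (1 : D) ∈ Submodule.span F {y : D | ∃ r : F, y = (a + (r : D))⁻¹} := by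
  classical
  set n := (minpoly F a).natDegree with hn
  have hpos : 0 < n := minpoly.natDegree_pos ha
  set e := Infinite.natEmbedding F with he
  set lam : Fin n → F := fun i => e i.1 with hlam
  have hlaminj : Function.Injective lam := by
    intro i j h
    exact Fin.ext (e.injective h)
  set v : Fin n → D := fun i => (a + ((lam i : F) : D))⁻¹ with hv
  -- linear independence
  have li : LinearIndependent F v := by
    rw [Fintype.linearIndependent_iff]
    intro g hg i
    set PP : (F)[X] := ∏ j : Fin n, (X + C (lam j)) with hPP
    set Pa : D := aeval a PP with hPa
    set P : Fin n → (F)[X] := fun i => ∏ j ∈ Finset.univ.erase i, (X + C (lam j)) with hP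
    have step1 : ∀ i : Fin n, v i * Pa = aeval a (P i) := by
      intro i
      have hsplit : (X + C (lam i)) * P i = PP :=
        Finset.mul_prod_erase Finset.univ (fun j => X + C (lam j)) (Finset.mem_univ i)
      have h5 : Pa = (a + ((lam i : F) : D)) * aeval a (P i) := by
        rw [hPa, ← hsplit, map_mul, map_add, aeval_X, aeval_C, amap]
      rw [h5, hv, ← mul_assoc, inv_mul_cancel₀ (add_central_ne_zero ha' (lam i)), one_mul]
    have step2 : aeval a (∑ i : Fin n, C (g i) * P i) = 0 := by
      have h1 : (∑ i : Fin n, g i • v i) * Pa = 0 := by rw [hg, zero_mul]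
      rw [Finset.sum_mul] at h1
      rw [map_sum]
      rw [← h1]
      refine Finset.sum_congr rfl fun i _ => ?_
      rw [map_mul, aeval_C, amap, ← step1, csmul, mul_assoc]
    set Q : (F)[X] := ∑ i : Fin n, C (g i) * P i with hQ
    have hQdeg : Q.natDegree ≤ n - 1 := by
      refine (natDegree_sum_le _ _).trans ?_
      rw [Finset.fold_max_le]
      constructor
      · omega
      · intro i _
        refine (natDegree_mul_le).trans ?_
        rw [natDegree_C, zero_add]
        refine (natDegree_prod_le _ _).trans ?_
        have : ∀ j ∈ Finset.univ.erase i, (X + C (lam j)).natDegree = 1 := fun j _ =>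
          natDegree_X_add_C _
        rw [Finset.sum_congr rfl this, Finset.sum_const, smul_eq_mul, mul_one,
          Finset.card_erase_of_mem (Finset.mem_univ i), Finset.card_univ, Fintype.card_fin]
    have hQ0 : Q = 0 := by
      by_contra hne
      have := minpoly.degree_le_of_ne_zero F a hne step2
      have h2 := natDegree_le_natDegree this
      omega
    -- evaluate at -lam i
    have hev := congrArg (eval (-(lam i))) hQ0
    rw [hQ, eval_finset_sum, eval_zero] at hev
    have hterm : ∀ j ∈ Finset.univ, j ≠ i →
        eval (-(lam i)) (C (g j) * P j) = 0 := by
      intro j _ hji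
      rw [eval_mul, eval_C, hP, eval_prod]
      have hizero : eval (-(lam i)) (X + C (lam i)) = 0 := by
        rw [eval_add, eval_X, eval_C]; ring
      rw [Finset.prod_eq_zero (Finset.mem_erase.mpr ⟨Ne.symm hji, Finset.mem_univ i⟩) hizero,
        mul_zero]
    rw [Finset.sum_eq_single i hterm (fun h => absurd (Finset.mem_univ i) h)] at hev
    rw [eval_mul, eval_C, hP, eval_prod] at hev
    have hprodne : ∏ j ∈ Finset.univ.erase i, eval (-(lam i)) (X + C (lam j)) ≠ 0 := by
      refine Finset.prod_ne_zero_iff.mpr fun j hj => ?_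
      rw [eval_add, eval_X, eval_C]
      intro h
      have h6 : lam i = lam j := neg_add_eq_zero.mp h
      exact (Finset.mem_erase.mp hj).1 (hlaminj h6.symm)
    rcases mul_eq_zero.mp hev with h | h
    · exact h
    · exact absurd h hprodne
  -- span equality
  have hsub : Submodule.span F (Set.range v) ≤ Vpow a n := by
    rw [Submodule.span_le]
    rintro x ⟨i, rfl⟩
    exact inv_add_mem_Vpow ha ha' (lam i)
  haveI : FiniteDimensional F (Vpow a n) :=
    FiniteDimensional.span_of_finite F (Set.finite_range _)
  have hrk1 : Module.finrank F (Vpow a n) ≤ n := by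
    refine (finrank_span_le_card _).trans ?_
    rw [Set.toFinset_range]
    exact (Finset.card_image_le).trans (by simp)
  have hrk2 : Module.finrank F (Submodule.span F (Set.range v)) = n := by
    rw [finrank_span_eq_card li, Fintype.card_fin]
  have heq : Submodule.span F (Set.range v) = Vpow a n :=
    Submodule.eq_of_le_of_finrank_le hsub (by omega)
  have h1 : (1 : D) ∈ Submodule.span F (Set.range v) := by
    rw [heq]
    exact one_mem_Vpow a ha
  refine Submodule.span_mono ?_ h1
  rintro x ⟨i, rfl⟩
  exact ⟨lam i, rfl⟩

/-- A multiplicatively closed submodule over the center, as a subring. -/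
def toSubring (W : Submodule (Subring.center D) D) (h1 : (1 : D) ∈ W)
    (hmul : ∀ u ∈ W, ∀ w ∈ W, u * w ∈ W) : Subring D where
  carrier := W
  mul_mem' hx hy := hmul _ hx _ hy
  one_mem' := h1
  add_mem' hx hy := W.add_mem hx hy
  zero_mem' := W.zero_mem
  neg_mem' hx := W.neg_mem hx

/-- Left multiplication as an `S`-linear map, when `a` commutes with `S`. -/
def Llin (S : Subring D) (a : D) (hc : ∀ s : S, a * (s : D) = (s : D) * a) : D →ₗ[S] D where
  toFun x := a * x
  map_add' x y := mul_add a x y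
  map_smul' k x := by
    show a * ((k : D) * x) = (k : D) * (a * x)
    rw [← mul_assoc, hc k, mul_assoc]

/-- Right multiplication as an `S`-linear map. -/
def Rlin (S : Subring D) (a : D) : D →ₗ[S] D where
  toFun x := x * a
  map_add' x y := add_mul x y a
  map_smul' k x := by
    show ((k : D) * x) * a = (k : D) * (x * a)
    rw [mul_assoc]

@[simp] lemma Llin_apply (S : Subring D) (a : D) (hc) (x : D) : Llin S a hc x = a * x := rfl
@[simp] lemma Rlin_apply (S : Subring D) (a : D) (x : D) : Rlin S a x = x * a := rfl

set_option maxHeartbeats 2000000 in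
set_option synthInstance.maxHeartbeats 400000 in
lemma jacobson_finite_center [Finite F] (halg : ∀ z : D, IsAlgebraic F z)
    (hnc : ∃ x y : D, x * y ≠ y * x) : False := by
  classical
  obtain ⟨x0, y0, hxy⟩ := hnc
  have ha' : x0 ∉ F := fun h => hxy (Subring.mem_center_iff.mp h y0).symm
  set a := x0 with haa
  -- characteristic
  set p := ringChar D with hpdef
  have hprime : p.Prime := by
    rcases CharP.char_is_prime_or_zero D p with h | h
    · exact h
    · exfalso
      haveI : CharP D 0 := h ▸ ringChar.charP D
      haveI : CharZero D := CharP.charP_to_charZero D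
      have hinj : Function.Injective (fun n : ℕ => (⟨(n : D), natCast_mem (Subring.center D) n⟩ : F)) := by
        intro m n h2
        exact Nat.cast_injective (congrArg Subtype.val h2)
      haveI := Infinite.of_injective _ hinj
      exact not_finite ↥F
  -- the finite field K = F[a]
  set K := Subring.closure ((F : Set D) ∪ {a}) with hK
  haveI hKfin : Finite K := closure_finite (halg a).isIntegral
  have ha_mem : a ∈ K := Subring.subset_closure (Or.inr rfl)
  have hFK : ∀ r : F, (r : D) ∈ K := fun r => Subring.subset_closure (Or.inl r.2)
  letI : Field K := (Finite.isDomain_to_isField K).toField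
  have hcomm : ∀ x y : D, x ∈ K → y ∈ K → x * y = y * x := by
    intro x y hx hy
    exact congrArg Subtype.val (mul_comm (⟨x, hx⟩ : K) ⟨y, hy⟩)
  have ksmul : ∀ (k : K) (x : D), k • x = (k : D) * x := fun _ _ => rfl
  -- delta, L, R as K-linear maps
  set L : D →ₗ[K] D := Llin K a (fun s => hcomm a s ha_mem s.2) with hL
  set R : D →ₗ[K] D := Rlin K a with hR
  set dlt : D →ₗ[K] D := L - R with hdlt
  have hdlt_apply : ∀ x : D, dlt x = a * x - x * a := fun x => rfl
  have hLR : Commute L R := by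
    ext x
    show a * (x * a) = (a * x) * a
    rw [mul_assoc]
  have Lpow : ∀ (m : ℕ) (x : D), (L ^ m) x = a ^ m * x := by
    intro m
    induction m with
    | zero => intro x; simp
    | succ k ih =>
      intro x
      rw [pow_succ, Module.End.mul_apply]
      have h1 : L x = a * x := rfl
      rw [h1, ih (a * x), ← mul_assoc, ← pow_succ]
  have Rpow : ∀ (m : ℕ) (x : D), (R ^ m) x = x * a ^ m := by
    intro m
    induction m with
    | zero => intro x; simp
    | succ k ih =>
      intro x
      rw [pow_succ, Module.End.mul_apply]
      have h1 : R x = x * a := rfl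
      rw [h1, ih (x * a), mul_assoc, ← pow_succ']
  -- char p facts
  haveI : CharP D p := ringChar.charP D
  haveI hKchar : CharP K p := CharP.subring D p K
  haveI : CharP (D →ₗ[K] D) p := Module.charP_end ⟨1, (Submodule.eq_bot_iff _).mpr fun r hr => by
    have : (r : D) = 0 := by
      have := (Ideal.mem_torsionOf_iff _ _).mp hr
      rw [ksmul, mul_one] at this
      exact this
    exact Subtype.ext this⟩
  haveI : ExpChar (D →ₗ[K] D) p := ExpChar.prime hprime
  -- card of K
  letI : Fintype K := Fintype.ofFinite K
  obtain ⟨k, hpk, hq⟩ := FiniteField.card K p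
  have haq : a ^ (Fintype.card K) = a := by
    have := FiniteField.pow_card (⟨a, ha_mem⟩ : K)
    have h2 := congrArg Subtype.val this
    push_cast at h2
    exact h2
  have hdlt_pow : dlt ^ (Fintype.card K) = dlt := by
    have h1 : (L - R) ^ (p ^ (k : ℕ)) = L ^ (p ^ (k : ℕ)) - R ^ (p ^ (k : ℕ)) :=
      sub_pow_expChar_pow_of_commute p (k : ℕ) hLR
    rw [hdlt, hq, h1]
    ext x
    rw [LinearMap.sub_apply, Lpow, Rpow, ← hq, haq]
    rfl
  -- delta is nonzero somewhere
  have hy0 : dlt y0 ≠ 0 := by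
    rw [hdlt_apply]
    intro h
    exact hxy (sub_eq_zero.mp h)
  -- aeval vanishing
  have hvanish : Polynomial.aeval dlt (∏ c : K, (X - C c)) = 0 := by
    rw [prod_X_sub_C_univ K, map_sub, map_pow, aeval_X, hdlt_pow, sub_self]
  -- extract eigenvector with nonzero eigenvalue
  have hsplit0 : (∏ c : K, (X - C c) : K[X])
      = (∏ c ∈ Finset.univ.erase (0 : K), (X - C c)) * X := by
    rw [← Finset.mul_prod_erase Finset.univ _ (Finset.mem_univ (0 : K))]
    rw [map_zero, sub_zero, mul_comm]
  have hpoint : (Polynomial.aeval dlt (∏ c ∈ Finset.univ.erase (0 : K), (X - C c))) (dlt y0) = 0 := by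
    have h1 : Polynomial.aeval dlt ((∏ c ∈ Finset.univ.erase (0 : K), (X - C c)) * X) = 0 := by
      rw [← hsplit0]; exact hvanish
    rw [map_mul, aeval_X] at h1
    exact congrArg (fun f : D →ₗ[K] D => f y0) h1
  obtain ⟨c, hcmem, b, hbne, heig⟩ :=
    eigen_extract dlt (Finset.univ.erase (0 : K)) (dlt y0) hy0 hpoint
  have hc0 : c ≠ 0 := (Finset.mem_erase.mp hcmem).1
  have hcD : (c : D) ≠ 0 := fun h => hc0 (Subtype.ext h)
  rw [ksmul] at heig
  rw [hdlt_apply] at heig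
  -- hb : a * b - b * a = c * b
  have hconj : b * a = (a - (c : D)) * b := by
    rw [sub_mul]
    rw [← heig]
    abel
  have hconjK : ∀ z ∈ K, b * z * b⁻¹ ∈ K := by
    intro z hz
    rw [hK] at hz
    induction hz using Subring.closure_induction with
    | mem x hx =>
      rcases hx with hx | hx
      · have hcen : b * x = x * b := (Subring.mem_center_iff.mp hx b)
        rw [hcen, mul_assoc, mul_inv_cancel₀ hbne, mul_one]
        exact Subring.subset_closure (Or.inl hx)
      · rcases hx with rfl
        rw [hconj, mul_assoc, mul_inv_cancel₀ hbne, mul_one]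
        exact sub_mem ha_mem c.2
    | zero => rw [mul_zero, zero_mul]; exact zero_mem K
    | one => rw [mul_one, mul_inv_cancel₀ hbne]; exact one_mem K
    | add x y hxm hym ihx ihy => rw [mul_add, add_mul]; exact add_mem ihx ihy
    | neg x hxm ihx => rw [mul_neg, neg_mul]; exact neg_mem ihx
    | mul x y hxm hym ihx ihy =>
      have h9 : (b * x * b⁻¹) * (b * y * b⁻¹) = b * (x * y) * b⁻¹ := by
        have hbb : b⁻¹ * b = 1 := inv_mul_cancel₀ hbne
        calc (b * x * b⁻¹) * (b * y * b⁻¹) = b * (x * ((b⁻¹ * b) * (y * b⁻¹))) := by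
              simp only [mul_assoc]
          _ = b * (x * (y * b⁻¹)) := by rw [hbb, one_mul]
          _ = b * (x * y) * b⁻¹ := by simp only [mul_assoc]
      rw [← h9]
      exact mul_mem ihx ihy
  have hpowconjK : ∀ (i : ℕ), ∀ z ∈ K, b ^ i * z * (b ^ i)⁻¹ ∈ K := by
    intro i
    induction i with
    | zero => intro z hz; simpa using hz
    | succ j ih =>
      intro z hz
      have h1 : b ^ (j+1) = b * b ^ j := by rw [pow_succ']
      rw [h1, mul_inv_rev]
      have h2 : b * b ^ j * z * ((b ^ j)⁻¹ * b⁻¹) = b * (b ^ j * z * (b ^ j)⁻¹) * b⁻¹ := by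
        simp only [mul_assoc]
      rw [h2]
      exact hconjK _ (ih z hz)
  have hbKfin : Finite (Subring.closure ((F : Set D) ∪ {b})) := closure_finite (halg b).isIntegral
  have hpows : {w : D | ∃ i : ℕ, w = b ^ i}.Finite := by
    have hsub : {w : D | ∃ i : ℕ, w = b ^ i} ⊆ (Subring.closure ((F : Set D) ∪ {b}) : Set D) := by
      rintro w ⟨i, rfl⟩
      show b ^ i ∈ Subring.closure ((F : Set D) ∪ {b})
      have hbcl : b ∈ Subring.closure ((F : Set D) ∪ {b}) := Subring.subset_closure (Or.inr rfl)
      exact Subring.pow_mem _ hbcl i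
    exact (Set.toFinite (Subring.closure ((F : Set D) ∪ {b}) : Set D)).subset hsub
  set Mset : Set D := {w : D | ∃ z ∈ K, ∃ i : ℕ, w = z * b ^ i} with hMset
  have hMfin : Mset.Finite := by
    have himg : Mset ⊆ Set.image2 (fun z w => z * w) (K : Set D) {w : D | ∃ i : ℕ, w = b ^ i} := by
      rintro w ⟨z, hz, i, rfl⟩
      exact ⟨z, hz, b ^ i, ⟨i, rfl⟩, rfl⟩
    exact (Set.Finite.image2 _ (Set.toFinite _) hpows).subset himg
  have hMmul : ∀ u ∈ Mset, ∀ w ∈ Mset, u * w ∈ Mset := by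
    rintro u ⟨z, hz, i, rfl⟩ w ⟨z', hz', j, rfl⟩
    refine ⟨z * (b ^ i * z' * (b ^ i)⁻¹), mul_mem hz (hpowconjK i z' hz'), i + j, ?_⟩
    have hbi : b ^ i ≠ 0 := pow_ne_zero i hbne
    have h1 : (b ^ i)⁻¹ * b ^ i = 1 := inv_mul_cancel₀ hbi
    rw [pow_add]
    calc z * b ^ i * (z' * b ^ j)
        = z * (b ^ i * (z' * b ^ j)) := by simp only [mul_assoc]
      _ = z * (b ^ i * (z' * (((b ^ i)⁻¹ * b ^ i) * b ^ j))) := by rw [h1, one_mul]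
      _ = z * (b ^ i * z' * (b ^ i)⁻¹) * (b ^ i * b ^ j) := by simp only [mul_assoc]
  have h1M : (1 : D) ∈ Mset := ⟨1, one_mem K, 0, by simp⟩
  have haM : a ∈ Mset := ⟨a, ha_mem, 0, by simp⟩
  have hbM : b ∈ Mset := ⟨1, one_mem K, 1, by simp⟩
  set W := Submodule.span F Mset with hW
  have hgen : ∀ m ∈ Mset, ∀ w ∈ W, m * w ∈ W := by
    intro m hm w hw
    refine Submodule.span_induction ?_ ?_ ?_ ?_ hw
    · intro x hx; exact Submodule.subset_span (hMmul m hm x hx)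
    · rw [mul_zero]; exact Submodule.zero_mem _
    · intro x y _ _ hx hy; rw [mul_add]; exact Submodule.add_mem _ hx hy
    · intro r x _ hx
      rw [csmul, ← mul_assoc, ccomm, mul_assoc, ← csmul]
      exact Submodule.smul_mem _ _ hx
  have hWmul : ∀ u ∈ W, ∀ w ∈ W, u * w ∈ W := by
    intro u hu w hw
    refine Submodule.span_induction ?_ ?_ ?_ ?_ hu
    · intro m hm; exact hgen m hm w hw
    · rw [zero_mul]; exact Submodule.zero_mem _
    · intro x y _ _ hx hy; rw [add_mul]; exact Submodule.add_mem _ hx hy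
    · intro r x _ hx
      rw [csmul, mul_assoc, ← csmul]
      exact Submodule.smul_mem _ _ hx
  set WS : Subring D := toSubring W (Submodule.subset_span h1M) hWmul with hWS
  haveI : FiniteDimensional F W := FiniteDimensional.span_of_finite F hMfin
  haveI hWfin : Finite W := Module.finite_of_finite F
  haveI hWSfin : Finite WS := by
    refine Finite.of_injective (fun x : WS => (⟨x.1, x.2⟩ : W)) ?_
    intro x y hxy
    exact Subtype.ext (congrArg Subtype.val hxy)
  have hfield := Finite.isDomain_to_isField WS
  have hab : a * b = b * a := by
    have h7 := hfield.mul_comm (⟨a, Submodule.subset_span haM⟩ : WS)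
      (⟨b, Submodule.subset_span hbM⟩ : WS)
    exact congrArg Subtype.val h7
  have h8 : (c : D) * b = 0 := by rw [← heig, hab, sub_self]
  rcases mul_eq_zero.mp h8 with h | h
  · exact hcD h
  · exact hbne h

/-- Left multiplication as a linear map over the center. -/
def lmulLin (y : D) : D →ₗ[Subring.center D] D where
  toFun v := y * v
  map_add' := mul_add y
  map_smul' r v := by
    show y * ((r : D) * v) = (r : D) * (y * v)
    rw [← mul_assoc, ccomm r y, mul_assoc]

@[simp] lemma lmulLin_apply (y v : D) : lmulLin y v = y * v := rfl

lemma conj_mem_genset {u z : D} (hu : u ≠ 0)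
    (hz : z ∈ {z : D | ∃ x y : D, x ≠ 0 ∧ y ≠ 0 ∧ z = x * y * x⁻¹ * y⁻¹}) :
    u * z * u⁻¹ ∈ {z : D | ∃ x y : D, x ≠ 0 ∧ y ≠ 0 ∧ z = x * y * x⁻¹ * y⁻¹} := by
  obtain ⟨s, t, hs, ht, rfl⟩ := hz
  refine ⟨u * s * u⁻¹, u * t * u⁻¹,
    mul_ne_zero (mul_ne_zero hu hs) (inv_ne_zero hu),
    mul_ne_zero (mul_ne_zero hu ht) (inv_ne_zero hu), ?_⟩
  simp only [mul_inv_rev, inv_inv, mul_assoc, inv_mul_cancel_left₀ hu]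

theorem stmt_3' (halg : ∀ a : D, IsAlgebraic (Subring.center D) a)
    (hnc : ∃ x y : D, x * y ≠ y * x) :
    ∀ a : D, ∀ x ∈ Submodule.span (Subring.center D)
      {z : D | ∃ x y : D, x ≠ 0 ∧ y ≠ 0 ∧ z = x * y * x⁻¹ * y⁻¹},
      a * x - x * a ∈ Submodule.span (Subring.center D)
        {z : D | ∃ x y : D, x ≠ 0 ∧ y ≠ 0 ∧ z = x * y * x⁻¹ * y⁻¹} := by
  set S0 := {z : D | ∃ x y : D, x ≠ 0 ∧ y ≠ 0 ∧ z = x * y * x⁻¹ * y⁻¹} with hS0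
  intro a x hx
  refine Submodule.span_induction ?_ ?_ ?_ ?_ hx
  · -- generators
    intro z hz
    by_cases hctr : a ∈ Subring.center D
    · have h1 := Subring.mem_center_iff.mp hctr z
      rw [h1, sub_self]
      exact Submodule.zero_mem _
    · rcases finite_or_infinite (Subring.center D) with hfin | hinf
      · exact (jacobson_finite_center halg hnc).elim
      · have hint : IsIntegral F a := (halg a).isIntegral
        have h1span := one_mem_inv_span hint hctr
        have hyu : ∀ r : F, (a * z - z * a) * (a + (r : D))⁻¹ ∈ Submodule.span F S0 := by
          intro r
          have hune : a + (r : D) ≠ 0 := add_central_ne_zero hctr r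
          have hzT : (a + (r : D)) * z * (a + (r : D))⁻¹ ∈ Submodule.span F S0 :=
            Submodule.subset_span (conj_mem_genset hune hz)
          have h2 : a * z - z * a = (a + (r : D)) * z - z * (a + (r : D)) := by
            rw [add_mul, mul_add, ccomm r z]
            abel
          have hyeq : (a * z - z * a) * (a + (r : D))⁻¹
              = (a + (r : D)) * z * (a + (r : D))⁻¹ - z := by
            rw [h2, sub_mul, mul_assoc z, mul_inv_cancel₀ hune, mul_one]
          rw [hyeq]
          exact Submodule.sub_mem _ hzT (Submodule.subset_span hz)
        have hle : Submodule.span F {w : D | ∃ r : F, w = (a + (r : D))⁻¹}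
            ≤ Submodule.comap (lmulLin (a * z - z * a)) (Submodule.span F S0) := by
          rw [Submodule.span_le]
          rintro w ⟨r, rfl⟩
          show lmulLin (a * z - z * a) (a + (r : D))⁻¹ ∈ Submodule.span F S0
          rw [lmulLin_apply]
          exact hyu r
        have h3 := hle h1span
        have h4 : lmulLin (a * z - z * a) 1 ∈ Submodule.span F S0 := h3
        rw [lmulLin_apply, mul_one] at h4
        exact h4
  · simp
  · intro v w _ _ ihv ihw
    have heq : a * (v + w) - (v + w) * a = (a * v - v * a) + (a * w - w * a) := by
      rw [mul_add, add_mul]; abel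
    rw [heq]
    exact Submodule.add_mem _ ihv ihw
  · intro r v _ ihv
    have heq : a * (r • v) - (r • v) * a = r • (a * v - v * a) := by
      rw [csmul, csmul, mul_sub]
      congr 1
      · rw [← mul_assoc, ccomm r a, mul_assoc]
      · rw [mul_assoc]
    rw [heq]
    exact Submodule.smul_mem _ _ ihv

end Aux

/-- In a non-commutative division ring algebraic over its centre, the span `T(D)` of
the multiplicative commutators is a Lie ideal. -/
theorem stmt_3 (D : Type*) [DivisionRing D]
    (halg : ∀ a : D, IsAlgebraic (Subring.center D) a)
    (hnc : ∃ x y : D, x * y ≠ y * x)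
    (T : Submodule (Subring.center D) D)
    (hT : T = Submodule.span (Subring.center D)
      {z : D | ∃ x y : D, x ≠ 0 ∧ y ≠ 0 ∧ z = x * y * x⁻¹ * y⁻¹}) :
    ∀ a : D, ∀ x ∈ T, a * x - x * a ∈ T := by
  subst hT
  exact stmt_3' halg hnc
end

section
/- Let D be a non-commutative division ring algebraic over its center F. Then T(D) is not contained in F, i.e., T(D) is a non-central Lie ideal of D. -/
/-- In a non-commutative division ring algebraic over its centre, `T(D)` is non-central. -/
theorem stmt_4 (D : Type*) [DivisionRing D]
    (halg : ∀ a : D, IsAlgebraic (Subring.center D) a)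
    (hnc : ∃ x y : D, x * y ≠ y * x)
    (T : Submodule (Subring.center D) D)
    (hT : T = Submodule.span (Subring.center D)
      {z : D | ∃ x y : D, x ≠ 0 ∧ y ≠ 0 ∧ z = x * y * x⁻¹ * y⁻¹}) :
    ∃ t ∈ T, t ∉ Subring.center D := by
  subst hT
  by_contra h
  push_neg at h
  -- every multiplicative commutator is central
  have hc : ∀ x y : D, x ≠ 0 → y ≠ 0 → ∀ g : D,
      g * (x * y * x⁻¹ * y⁻¹) = (x * y * x⁻¹ * y⁻¹) * g := by
    intro x y hx hy
    have := h _ (Submodule.subset_span ⟨x, y, hx, hy, rfl⟩)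
    exact fun g => Subring.mem_center_iff.mp this g
  obtain ⟨x, y, hxy⟩ := hnc
  have hx : x ≠ 0 := by rintro rfl; simp at hxy
  have hy : y ≠ 0 := by rintro rfl; simp at hxy
  have hy1 : y + 1 ≠ 0 := by
    intro h1
    exact hxy (by rw [eq_neg_of_add_eq_zero_left h1, mul_neg_one, neg_one_mul])
  set l := x * y * x⁻¹ * y⁻¹ with hl
  set m := x * (y + 1) * x⁻¹ * (y + 1)⁻¹ with hm
  have hlc := hc x y hx hy
  have hmc := hc x (y + 1) hx hy1
  have hl0 : l ≠ 0 := by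
    apply mul_ne_zero (mul_ne_zero (mul_ne_zero hx hy) (inv_ne_zero hx)) (inv_ne_zero hy)
  -- x*y = l*(y*x)
  have hxyl : x * y = l * (y * x) := by
    rw [hl]
    simp [mul_assoc, inv_mul_cancel_left₀ hy, inv_mul_cancel₀ hx, hx, hy]
  have hxym : x * (y + 1) = m * ((y + 1) * x) := by
    rw [hm]
    simp [mul_assoc, inv_mul_cancel_left₀ hy1, inv_mul_cancel₀ hx, hx, hy1]
  have hyx : y * x = l⁻¹ * (x * y) := by
    rw [hxyl, inv_mul_cancel_left₀ hl0]
  -- the key linear relation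
  have hkey : (1 - m * l⁻¹) * (x * y) = (m - 1) * x := by
    have h1 : x * y + x = m * (l⁻¹ * (x * y)) + m * x := by
      have := hxym
      rw [mul_add, mul_one, add_mul, one_mul, mul_add, hyx] at this
      exact this
    rw [sub_mul, one_mul, sub_mul, one_mul, mul_assoc, sub_eq_sub_iff_add_eq_add]
    exact h1.trans (add_comm _ _)
  -- commuting facts
  have cxl : Commute x l := hlc x
  have cxm : Commute x m := hmc x
  have cxli : Commute x l⁻¹ := cxl.inv_right₀
  have cxu : Commute x (1 - m * l⁻¹) := (Commute.one_right x).sub_right (cxm.mul_right cxli)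
  by_cases hu : (1 - m * l⁻¹) = 0
  · -- then m = l and m = 1, so l = 1
    have hml : m = l := by
      exact (mul_inv_eq_one₀ hl0).mp (sub_eq_zero.mp hu).symm
    have hm1 : m = 1 := by
      have h0 : (m - 1) * x = 0 := by rw [← hkey, hu, zero_mul]
      rcases mul_eq_zero.mp h0 with h0 | h0
      · exact sub_eq_zero.mp h0
      · exact absurd h0 hx
    have hl1 : l = 1 := by rw [← hml, hm1]
    rw [hl1, one_mul] at hxyl
    exact hxy hxyl
  · -- then x*y = c*x with c commuting with x, so y = c and x*y = y*x
    set u := 1 - m * l⁻¹ with hud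
    set c := u⁻¹ * (m - 1) with hcd
    have hxyc : x * y = c * x := by
      rw [hcd, mul_assoc, ← hkey, inv_mul_cancel_left₀ hu]
    have cxc : Commute x c :=
      (cxu.inv_right₀).mul_right ((cxm).sub_right (Commute.one_right x))
    have hyc : y = c := by
      apply mul_left_cancel₀ hx
      rw [hxyc, ← cxc.eq]
    apply hxy
    rw [hxyc, ← hyc]
end

section
/- Let D be a division ring with center F. If an element a ∈ D commutes with every multiplicative commutator xyx⁻¹y⁻¹ (x, y ∈ D*), then a ∈ F. -/
/-- An element of a division ring commuting with all multiplicative commutators is central. -/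
theorem stmt_6 (D : Type*) [DivisionRing D] (a : D)
    (h : ∀ x y : D, x ≠ 0 → y ≠ 0 →
      a * (x * y * x⁻¹ * y⁻¹) = (x * y * x⁻¹ * y⁻¹) * a) :
    a ∈ Subring.center D := by
  rw [Subring.mem_center_iff]
  intro x
  by_cases ha : a = 0
  · simp [ha]
  by_cases hx : x = 0
  · simp [hx]
  -- a commutes with every conjugate of itself
  have key : ∀ z : D, z ≠ 0 → a * (z * a * z⁻¹) = (z * a * z⁻¹) * a := by
    intro z hz
    have hc := h z a hz ha
    have e1 : z * a * z⁻¹ * a⁻¹ * a = z * a * z⁻¹ := by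
      rw [mul_assoc, inv_mul_cancel₀ ha, mul_one]
    calc a * (z * a * z⁻¹) = a * (z * a * z⁻¹ * a⁻¹ * a) := by rw [e1]
      _ = a * (z * a * z⁻¹ * a⁻¹) * a := by noncomm_ring
      _ = (z * a * z⁻¹ * a⁻¹) * a * a := by rw [hc]
      _ = (z * a * z⁻¹) * a := by rw [e1]
  by_cases hx1 : x + 1 = 0
  · have : x = -1 := eq_neg_of_add_eq_zero_left hx1
    simp [this]
  set u := x * a * x⁻¹ with hu_def
  set v := (x + 1) * a * (x + 1)⁻¹ with hv_def
  have hu : u * x = x * a := by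
    rw [hu_def, mul_assoc, inv_mul_cancel₀ hx, mul_one]
  have hv : v * (x + 1) = (x + 1) * a := by
    rw [hv_def, mul_assoc, inv_mul_cancel₀ hx1, mul_one]
  have hau : a * u = u * a := key x hx
  have hav : a * v = v * a := key (x + 1) hx1
  have heq : (v - u) * x = a - v := by
    have h2 : v * x + v = x * a + a := by
      calc v * x + v = v * (x + 1) := by noncomm_ring
        _ = (x + 1) * a := hv
        _ = x * a + a := by noncomm_ring
    have hvx : v * x = x * a + a - v := eq_sub_of_add_eq h2
    calc (v - u) * x = v * x - u * x := by noncomm_ring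
      _ = (x * a + a - v) - x * a := by rw [hvx, hu]
      _ = a - v := by abel
  have hcomm : a * (v - u) = (v - u) * a := by
    rw [mul_sub, sub_mul, hau, hav]
  have hzero : (v - u) * (a * x - x * a) = 0 := by
    have l1 : a * ((v - u) * x) = (v - u) * (a * x) := by
      rw [← mul_assoc, hcomm, mul_assoc]
    have l2 : a * (a - v) = (a - v) * a := by
      rw [mul_sub, sub_mul, hav]
    calc (v - u) * (a * x - x * a)
        = (v - u) * (a * x) - (v - u) * x * a := by noncomm_ring
      _ = a * ((v - u) * x) - (a - v) * a := by rw [l1, heq]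
      _ = a * (a - v) - (a - v) * a := by rw [heq]
      _ = 0 := by rw [l2, sub_self]
  by_contra hne
  have hd : a * x - x * a ≠ 0 := sub_ne_zero.mpr (fun hh => hne hh.symm)
  have hvu : v - u = 0 := by
    rcases mul_eq_zero.mp hzero with h1 | h1
    · exact h1
    · exact absurd h1 hd
  have hav2 : a = v := by
    have h3 : a - v = 0 := by rw [← heq, hvu, zero_mul]
    exact sub_eq_zero.mp h3
  have huv : v = u := sub_eq_zero.mp hvu
  exact hne (by rw [← hu, ← huv, ← hav2])
end

section
/- Let D be a non-commutative division ring finite-dimensional over its center F. Then T(D) is not commutative; that is, there exist s, t ∈ T(D) with st ≠ ts. -/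
section aux
variable {D : Type*} [DivisionRing D]

/-- The set of multiplicative commutators. -/
def commSet (D : Type*) [DivisionRing D] : Set D :=
  {z : D | ∃ x y : D, x ≠ 0 ∧ y ≠ 0 ∧ z = x * y * x⁻¹ * y⁻¹}

lemma commSet_conj {u : D} (hu : u ≠ 0) {z : D} (hz : z ∈ commSet D) :
    u * z * u⁻¹ ∈ commSet D := by
  obtain ⟨x, y, hx, hy, rfl⟩ := hz
  refine ⟨u * x * u⁻¹, u * y * u⁻¹, by simp [hu, hx], by simp [hu, hy], ?_⟩
  simp [mul_inv_rev, mul_assoc, inv_mul_cancel_left₀, hu]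

/-- The subfield generated by the commutators. -/
noncomputable def commK (D : Type*) [DivisionRing D] : Subfield D :=
  Subfield.closure (commSet D)

lemma commK_comm (hS : ∀ a ∈ commSet D, ∀ b ∈ commSet D, Commute a b) :
    ∀ a ∈ commK D, ∀ b ∈ commK D, Commute a b := by
  have step1 : ∀ a ∈ commK D, ∀ s ∈ commSet D, Commute s a := by
    intro a ha
    induction ha using Subfield.closure_induction with
    | mem x hx => exact fun s hs => hS s hs x hx
    | one => exact fun s _ => Commute.one_right s
    | add x y hx hy ihx ihy => exact fun s hs => (ihx s hs).add_right (ihy s hs)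
    | neg x hx ihx => exact fun s hs => (ihx s hs).neg_right
    | inv x hx ihx => exact fun s hs => (ihx s hs).inv_right₀
    | mul x y hx hy ihx ihy => exact fun s hs => (ihx s hs).mul_right (ihy s hs)
  intro a ha b hb
  induction ha using Subfield.closure_induction with
  | mem x hx => exact step1 b hb x hx
  | one => exact Commute.one_left b
  | add x y hx hy ihx ihy => exact ihx.add_left ihy
  | neg x hx ihx => exact ihx.neg_left
  | inv x hx ihx => exact ihx.inv_left₀
  | mul x y hx hy ihx ihy => exact ihx.mul_left ihy

lemma commK_conj {u : D} (hu : u ≠ 0) {a : D} (ha : a ∈ commK D) :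
    u * a * u⁻¹ ∈ commK D := by
  induction ha using Subfield.closure_induction with
  | mem x hx => exact Subfield.subset_closure (commSet_conj hu hx)
  | one => simpa [hu] using (commK D).one_mem
  | add x y hx hy ihx ihy =>
      have : u * (x + y) * u⁻¹ = u * x * u⁻¹ + u * y * u⁻¹ := by
        rw [mul_add, add_mul]
      rw [this]; exact add_mem ihx ihy
  | neg x hx ihx =>
      have : u * (-x) * u⁻¹ = -(u * x * u⁻¹) := by
        rw [mul_neg, neg_mul]
      rw [this]; exact neg_mem ihx
  | inv x hx ihx =>
      have : u * x⁻¹ * u⁻¹ = (u * x * u⁻¹)⁻¹ := by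
        simp [mul_inv_rev, mul_assoc, hu]
      rw [this]; exact inv_mem ihx
  | mul x y hx hy ihx ihy =>
      have : u * (x * y) * u⁻¹ = (u * x * u⁻¹) * (u * y * u⁻¹) := by
        simp [mul_assoc, inv_mul_cancel_left₀ hu]
      rw [this]; exact mul_mem ihx ihy

/-- Cartan–Brauer–Hua style argument: every element of `commK` is central. -/
lemma commK_central (hS : ∀ a ∈ commSet D, ∀ b ∈ commSet D, Commute a b) :
    ∀ a ∈ commK D, ∀ x : D, Commute a x := by
  intro a ha x
  by_cases hx : x ∈ commK D
  · exact commK_comm hS a ha x hx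
  · have hx0 : x ≠ 0 := fun h => hx (h ▸ (commK D).zero_mem)
    have hx1 : (1 : D) + x ≠ 0 := by
      intro h
      apply hx
      rw [eq_neg_of_add_eq_zero_right h]
      exact neg_mem (commK D).one_mem
    set b := x * a * x⁻¹ with hbdef
    set b' := (1 + x) * a * (1 + x)⁻¹ with hb'def
    have hb : b ∈ commK D := commK_conj hx0 ha
    have hb' : b' ∈ commK D := commK_conj hx1 ha
    have e1 : x * a = b * x := by
      rw [hbdef, mul_assoc, inv_mul_cancel₀ hx0, mul_one]
    have e2 : (1 + x) * a = b' * (1 + x) := by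
      rw [hb'def, mul_assoc, inv_mul_cancel₀ hx1, mul_one]
    have e3 : a + b * x = b' + b' * x := by
      have h := e2
      rw [add_mul, one_mul, e1, mul_add, mul_one] at h
      exact h
    by_cases hbb : b = b'
    · have ha' : a = b' := by
        have h := e3
        rw [hbb] at h
        exact add_right_cancel h
      have h : x * a = a * x := by rw [e1, hbb, ← ha']
      exact h.symm
    · exfalso
      apply hx
      have e4 : (b - b') * x = b' - a := by
        rw [sub_mul, sub_eq_sub_iff_add_eq_add, add_comm]
        exact e3
      have hxe : x = (b - b')⁻¹ * (b' - a) := by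
        rw [← e4, ← mul_assoc, inv_mul_cancel₀ (sub_ne_zero.mpr hbb), one_mul]
      rw [hxe]
      exact mul_mem (inv_mem (sub_mem hb hb')) (sub_mem hb' ha)

/-- Herstein: if all multiplicative commutators are central, `D` is commutative. -/
lemma herstein (hc : ∀ c ∈ commSet D, ∀ g : D, Commute c g) :
    ∀ x y : D, x * y = y * x := by
  intro x y
  by_cases hx0 : x = 0
  · simp [hx0]
  by_cases hy0 : y = 0
  · simp [hy0]
  by_cases hy1 : (1 : D) + y = 0
  · rw [eq_neg_of_add_eq_zero_right hy1]
    simp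
  set c := x * y * x⁻¹ * y⁻¹ with hcdef
  set c' := x * (1 + y) * x⁻¹ * (1 + y)⁻¹ with hc'def
  have hcS : c ∈ commSet D := ⟨x, y, hx0, hy0, rfl⟩
  have hc'S : c' ∈ commSet D := ⟨x, 1 + y, hx0, hy1, rfl⟩
  have e1 : x * y * x⁻¹ = c * y := by
    rw [hcdef, mul_assoc (x * y * x⁻¹) y⁻¹ y, inv_mul_cancel₀ hy0, mul_one]
  have e2 : x * (1 + y) * x⁻¹ = c' * (1 + y) := by
    rw [hc'def, mul_assoc (x * (1 + y) * x⁻¹) (1 + y)⁻¹ (1 + y),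
      inv_mul_cancel₀ hy1, mul_one]
  have e3 : 1 + c * y = c' + c' * y := by
    calc 1 + c * y = x * x⁻¹ + x * y * x⁻¹ := by rw [mul_inv_cancel₀ hx0, e1]
      _ = x * (1 + y) * x⁻¹ := by rw [mul_add, mul_one, add_mul]
      _ = c' * (1 + y) := e2
      _ = c' + c' * y := by rw [mul_add, mul_one]
  by_cases hcc : c = c'
  · have hc1 : c' = 1 := by
      have h := e3
      rw [hcc] at h
      exact (add_right_cancel h).symm
    have : x * y * x⁻¹ = y := by rw [e1, hcc, hc1, one_mul]
    calc x * y = x * y * x⁻¹ * x := by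
            rw [mul_assoc, inv_mul_cancel₀ hx0, mul_one]
      _ = y * x := by rw [this]
  · have e4 : (c - c') * y = c' - 1 := by
      rw [sub_mul, sub_eq_sub_iff_add_eq_add, add_comm]
      exact e3
    have hye : y = (c - c')⁻¹ * (c' - 1) := by
      rw [← e4, ← mul_assoc, inv_mul_cancel₀ (sub_ne_zero.mpr hcc), one_mul]
    have h1 : Commute (c - c') x := ((hc c hcS x).sub_left (hc c' hc'S x))
    have h2 : Commute (c' - 1) x := (hc c' hc'S x).sub_left (Commute.one_left x)
    have : Commute y x := by
      rw [hye]
      exact (h1.inv_left₀).mul_left h2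
    exact this.symm

end aux

/-- In a non-commutative centrally finite division ring, `T(D)` is not commutative. -/
theorem stmt_7 (D : Type*) [DivisionRing D]
    [Module.Finite (Subring.center D) D]
    (hnc : ∃ x y : D, x * y ≠ y * x)
    (T : Submodule (Subring.center D) D)
    (hT : T = Submodule.span (Subring.center D)
      {z : D | ∃ x y : D, x ≠ 0 ∧ y ≠ 0 ∧ z = x * y * x⁻¹ * y⁻¹}) :
    ∃ s ∈ T, ∃ t ∈ T, s * t ≠ t * s := by
  by_contra hcon
  push_neg at hcon
  obtain ⟨x, y, hxy⟩ := hnc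
  apply hxy
  have hmem : ∀ z ∈ commSet D, z ∈ T := by
    intro z hz
    rw [hT]
    exact Submodule.subset_span hz
  have hS : ∀ a ∈ commSet D, ∀ b ∈ commSet D, Commute a b := fun a ha b hb =>
    hcon a (hmem a ha) b (hmem b hb)
  exact herstein
    (fun cc hcc g => commK_central hS cc (Subfield.subset_closure hcc) g) x y
end

section
/- Let D be a division ring finite-dimensional over its center F. Then D = T(D); that is, D is spanned as an F-vector space by its multiplicative commutators {xyx⁻¹y⁻¹ : x, y ∈ D*}. -/
set_option linter.unusedSectionVars false

namespace Stmt11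

variable {D : Type*} [DivisionRing D]

local notation "Z" => Subring.center D

lemma csmul_def (c : Z) (x : D) : c • x = (c : D) * x := rfl

lemma coe_comm (c : Z) (x : D) : x * (c : D) = (c : D) * x :=
  Subring.mem_center_iff.1 c.2 x

/-- Left multiplication as a `Z`-linear map. -/
def lmul (a : D) : D →ₗ[Z] D where
  toFun x := a * x
  map_add' := mul_add a
  map_smul' c x := by
    simp only [csmul_def, RingHom.id_apply]
    rw [← mul_assoc, coe_comm c a, mul_assoc]

/-- Right multiplication as a `Z`-linear map. -/
def rmul (a : D) : D →ₗ[Z] D where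
  toFun x := x * a
  map_add' x y := add_mul x y a
  map_smul' c x := by
    simp only [csmul_def, RingHom.id_apply, mul_assoc]

lemma lmul_apply (a x : D) : lmul a x = a * x := rfl
lemma rmul_apply (a x : D) : rmul a x = x * a := rfl

lemma zero_mem_center : (0 : D) ∈ Z := Subring.zero_mem _

lemma noncentral_ne_zero {w : D} (hw : w ∉ Z) : w ≠ 0 := fun h => hw (h ▸ zero_mem_center)

lemma inv_noncentral {u : D} (hu : u ∉ Z) : u⁻¹ ∉ Z := by
  intro hc
  apply hu
  have hu0 : u ≠ 0 := noncentral_ne_zero hu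
  rw [Subring.mem_center_iff]
  intro g
  have h := Subring.mem_center_iff.1 hc (u * g * u)
  -- (u*g*u) * u⁻¹ = u⁻¹ * (u*g*u)
  have h1 : u * g * u * u⁻¹ = u * g := by
    rw [mul_assoc, mul_inv_cancel₀ hu0, mul_one]
  have h2 : u⁻¹ * (u * g * u) = g * u := by
    rw [← mul_assoc, ← mul_assoc, inv_mul_cancel₀ hu0, one_mul]
  rw [h1, h2] at h
  exact h.symm

/-! ### Resolvents -/

def resSet (b : D) : Set D := {w | ∃ ε : Z, ε ≠ 0 ∧ w = (1 + ε • b)⁻¹}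

def resSpan (b : D) : Submodule Z D := Submodule.span Z (resSet b)

lemma one_add_smul_ne_zero {b : D} (hb : b ∉ Z) {ε : Z} (hε : ε ≠ 0) :
    1 + ε • b ≠ 0 := by
  intro h
  apply hb
  have hb' : b = ((-ε⁻¹ : Z) : D) := by
    have h1 : ε • b = -1 := by linear_combination (norm := noncomm_ring) h
    have h2 : ε⁻¹ • (ε • b) = b := by
      rw [smul_smul, inv_mul_cancel₀ hε, one_smul]
    rw [h1] at h2
    rw [← h2, csmul_def]
    push_cast
    noncomm_ring
  rw [hb']
  exact SetLike.coe_mem _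

lemma resolvent_mem_resSpan {b : D} {ε : Z} (hε : ε ≠ 0) :
    (1 + ε • b)⁻¹ ∈ resSpan b :=
  Submodule.subset_span ⟨ε, hε, rfl⟩

/-- Key algebraic identity for resolvents. -/
lemma keyA {b : D} (hb : b ∉ Z) {ε δ : Z} (hε : ε ≠ 0) :
    (1 + δ • b) * (1 + ε • b)⁻¹
      = (δ * ε⁻¹) • (1 : D) + (1 - δ * ε⁻¹) • (1 + ε • b)⁻¹ := by
  have hne := one_add_smul_ne_zero hb hε
  have e1 : δ * ε⁻¹ * ε = δ := by
    rw [mul_assoc, inv_mul_cancel₀ hε, mul_one]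
  have h1 : (δ * ε⁻¹) • (1 + ε • b) + (1 - δ * ε⁻¹) • (1 : D) = 1 + δ • b := by
    rw [smul_add, smul_smul, e1, add_right_comm, ← add_smul]
    have e2 : δ * ε⁻¹ + (1 - δ * ε⁻¹) = 1 := by ring
    rw [e2, one_smul]
  calc (1 + δ • b) * (1 + ε • b)⁻¹
      = ((δ * ε⁻¹) • (1 + ε • b) + (1 - δ * ε⁻¹) • (1 : D)) * (1 + ε • b)⁻¹ := by rw [h1]
    _ = (δ * ε⁻¹) • ((1 + ε • b) * (1 + ε • b)⁻¹) + (1 - δ * ε⁻¹) • ((1:D) * (1 + ε • b)⁻¹) := by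
        rw [add_mul, smul_mul_assoc, smul_mul_assoc]
    _ = (δ * ε⁻¹) • (1 : D) + (1 - δ * ε⁻¹) • (1 + ε • b)⁻¹ := by
        rw [mul_inv_cancel₀ hne, one_mul]


/-- If some nontrivial linear relation holds among distinct nonzero resolvents of `b`,
then `1` lies in the span of all resolvents of `b`. -/
lemma one_mem_of_relation {b : D} (hb : b ∉ Z) :
    ∀ (k : ℕ) (ε : Fin k → Z), Function.Injective ε → (∀ i, ε i ≠ 0) →
      ∀ g : Fin k → Z, ∑ i, g i • (1 + ε i • b)⁻¹ = 0 → (∃ i, g i ≠ 0) →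
      (1 : D) ∈ resSpan b := by
  intro k
  induction k with
  | zero => exact fun ε _ _ g _ hex => hex.choose.elim0
  | succ k ih =>
    intro ε hinj h0 g hrel hex
    set v : Fin (k+1) → D := fun i => (1 + ε i • b)⁻¹ with hv
    have hrel2 : (∑ i, g i * (ε 0 * (ε i)⁻¹)) • (1:D)
        + ∑ i, (g i * (1 - ε 0 * (ε i)⁻¹)) • v i = 0 := by
      have step : ∀ i, g i • ((1 + ε 0 • b) * v i)
          = (g i * (ε 0 * (ε i)⁻¹)) • (1:D) + (g i * (1 - ε 0 * (ε i)⁻¹)) • v i := by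
        intro i
        rw [hv]
        rw [keyA hb (h0 i), smul_add, smul_smul, smul_smul]
      calc (∑ i, g i * (ε 0 * (ε i)⁻¹)) • (1:D)
            + ∑ i, (g i * (1 - ε 0 * (ε i)⁻¹)) • v i
          = ∑ i, ((g i * (ε 0 * (ε i)⁻¹)) • (1:D) + (g i * (1 - ε 0 * (ε i)⁻¹)) • v i) := by
            rw [Finset.sum_add_distrib, Finset.sum_smul]
        _ = ∑ i, g i • ((1 + ε 0 • b) * v i) := by
            exact Finset.sum_congr rfl (fun i _ => (step i).symm)
        _ = (1 + ε 0 • b) * ∑ i, g i • v i := by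
            rw [Finset.mul_sum]
            exact Finset.sum_congr rfl (fun i _ => (mul_smul_comm _ _ _).symm)
        _ = 0 := by rw [hrel, mul_zero]
    set σ : Z := ∑ i, g i * (ε 0 * (ε i)⁻¹) with hσdef
    by_cases hσ : σ = 0
    · -- tail relation
      have h4 : ∑ i, (g i * (1 - ε 0 * (ε i)⁻¹)) • v i = 0 := by
        rw [hσ, zero_smul, zero_add] at hrel2
        exact hrel2
      have hμ0 : (g 0 * (1 - ε 0 * (ε 0)⁻¹)) = 0 := by
        rw [mul_inv_cancel₀ (h0 0), sub_self, mul_zero]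
      have h5 : ∑ i : Fin k, (g i.succ * (1 - ε 0 * (ε i.succ)⁻¹)) • v i.succ = 0 := by
        rw [Fin.sum_univ_succ, hμ0, zero_smul, zero_add] at h4
        exact h4
      by_cases hex2 : ∃ j : Fin k, g j.succ * (1 - ε 0 * (ε j.succ)⁻¹) ≠ 0
      · exact ih (fun j => ε j.succ)
          (fun a b hab => Fin.succ_injective _ (hinj hab))
          (fun j => h0 j.succ)
          (fun j => g j.succ * (1 - ε 0 * (ε j.succ)⁻¹)) h5 hex2
      · push_neg at hex2
        have hgsucc : ∀ j : Fin k, g j.succ = 0 := by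
          intro j
          have hfac : (1 - ε 0 * (ε j.succ)⁻¹) ≠ 0 := by
            intro hzero
            have h6 : ε 0 * (ε j.succ)⁻¹ = 1 := (sub_eq_zero.mp hzero).symm
            have : ε 0 = ε j.succ := (mul_inv_eq_one₀ (h0 j.succ)).1 h6
            exact (Fin.succ_ne_zero j).symm (hinj this)
          rcases mul_eq_zero.1 (hex2 j) with h | h
          · exact h
          · exact absurd h hfac
        have hg0 : g 0 = 0 := by
          have : σ = g 0 := by
            rw [hσdef, Fin.sum_univ_succ, mul_inv_cancel₀ (h0 0), mul_one]
            rw [Finset.sum_eq_zero (fun j _ => by rw [hgsucc j, zero_mul]), add_zero]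
          rw [← this, hσ]
        obtain ⟨i, hi⟩ := hex
        refine absurd ?_ hi
        rcases Fin.eq_zero_or_eq_succ i with h | ⟨j, rfl⟩
        · rw [h, hg0]
        · exact hgsucc j
    · -- 1 is a combination of resolvents
      have h7 : σ • (1:D) = -∑ i, (g i * (1 - ε 0 * (ε i)⁻¹)) • v i :=
        eq_neg_of_add_eq_zero_left hrel2
      have h8 : (1:D) = σ⁻¹ • (σ • (1:D)) := by
        rw [smul_smul, inv_mul_cancel₀ hσ, one_smul]
      rw [h8, h7]
      refine Submodule.smul_mem _ _ (Submodule.neg_mem _ (Submodule.sum_mem _ (fun i _ => ?_)))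
      exact Submodule.smul_mem _ _ (resolvent_mem_resSpan (h0 i))


variable [Module.Finite (Subring.center D) D]

lemma one_mem_resSpan (hinf : Infinite Z) {b : D} (hb : b ∉ Z) :
    (1 : D) ∈ resSpan b := by
  classical
  set n := Module.finrank Z D with hn
  -- choose n+1 distinct nonzero scalars
  have hcompl : (({0}ᶜ : Set Z)).Infinite := (Set.finite_singleton 0).infinite_compl
  set emb := hcompl.natEmbedding with hemb
  set ε : Fin (n+1) → Z := fun i => (emb i.1).1 with hε
  have hεinj : Function.Injective ε := by
    intro i j hij
    exact Fin.val_injective (by exact_mod_cast emb.injective (Subtype.ext hij))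
  have hε0 : ∀ i, ε i ≠ 0 := fun i => (emb i.1).2
  set v : Fin (n+1) → D := fun i => (1 + ε i • b)⁻¹ with hv
  have hni : ¬ LinearIndependent Z v := by
    intro hli
    have := hli.fintype_card_le_finrank
    simp only [Fintype.card_fin, ← hn] at this
    omega
  obtain ⟨g, hsum, hex⟩ := Fintype.not_linearIndependent_iff.1 hni
  exact one_mem_of_relation hb (n+1) ε hεinj hε0 g hsum hex

lemma self_mem_resSpan (hinf : Infinite Z) {b : D} (hb : b ∉ Z) :
    b ∈ resSpan b := by
  have hmap : Submodule.map (lmul b) (resSpan b) ≤ resSpan b := by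
    rw [resSpan, Submodule.map_span_le]
    rintro w ⟨ε, hε, rfl⟩
    have hne := one_add_smul_ne_zero hb hε
    have hid : lmul b (1 + ε • b)⁻¹ = ε⁻¹ • (1:D) - ε⁻¹ • (1 + ε • b)⁻¹ := by
      rw [lmul_apply]
      have h1 : (1 + ε • b) * (1 + ε • b)⁻¹ = 1 := mul_inv_cancel₀ hne
      have h2 : (1:D) * (1 + ε • b)⁻¹ + (ε • b) * (1 + ε • b)⁻¹ = 1 := by
        rw [← add_mul]; exact h1
      have h3 : ε • (b * (1 + ε • b)⁻¹) = 1 - (1 + ε • b)⁻¹ := by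
        rw [← smul_mul_assoc]
        rw [one_mul] at h2
        linear_combination (norm := noncomm_ring) h2
      calc b * (1 + ε • b)⁻¹ = ε⁻¹ • (ε • (b * (1 + ε • b)⁻¹)) := by
            rw [smul_smul, inv_mul_cancel₀ hε, one_smul]
        _ = ε⁻¹ • ((1:D) - (1 + ε • b)⁻¹) := by rw [h3]
        _ = ε⁻¹ • (1:D) - ε⁻¹ • (1 + ε • b)⁻¹ := smul_sub _ _ _
    rw [hid]
    exact Submodule.sub_mem _ (Submodule.smul_mem _ _ (one_mem_resSpan hinf hb))
      (Submodule.smul_mem _ _ (resolvent_mem_resSpan hε))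
  have : lmul b 1 ∈ Submodule.map (lmul b) (resSpan b) :=
    Submodule.mem_map_of_mem (one_mem_resSpan hinf hb)
  rw [lmul_apply, mul_one] at this
  exact hmap this


/-- A submodule invariant under all inner automorphisms. -/
def IsInvariant (M : Submodule (Subring.center D) D) : Prop :=
  ∀ x : D, x ≠ 0 → ∀ m ∈ M, x * m * x⁻¹ ∈ M

/-- Key lemma: an invariant submodule absorbs commutators with its elements,
and such commutators multiplied by the (noncentral) other factor. -/
lemma comm_mem (hinf : Infinite Z) {M : Submodule (Subring.center D) D}
    (hM : IsInvariant M) {m : D} (hm : m ∈ M) {w : D} (hw : w ∉ Z) :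
    w * m - m * w ∈ M ∧ (w * m - m * w) * w ∈ M := by
  set l : D := w * m - m * w with hl
  have hgen : ∀ u ∈ resSet w, lmul l u ∈ M := by
    rintro u ⟨ε, hε, rfl⟩
    have ha : (1 + ε • w) ≠ 0 := one_add_smul_ne_zero hw hε
    have hconj : (1 + ε • w) * m * (1 + ε • w)⁻¹ ∈ M := hM _ ha m hm
    have hid : lmul l (1 + ε • w)⁻¹
        = ε⁻¹ • ((1 + ε • w) * m * (1 + ε • w)⁻¹ - m) := by
      rw [lmul_apply]
      have h1 : (1 + ε • w) * m - m * (1 + ε • w) = ε • l := by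
        rw [hl, smul_sub, add_mul, mul_add, one_mul, mul_one, smul_mul_assoc,
          mul_smul_comm]
        abel
      have h2 : (1 + ε • w) * m * (1 + ε • w)⁻¹ - m
          = ((1 + ε • w) * m - m * (1 + ε • w)) * (1 + ε • w)⁻¹ := by
        rw [sub_mul, mul_assoc m, mul_inv_cancel₀ ha, mul_one]
      rw [h2, h1, smul_mul_assoc, smul_smul, inv_mul_cancel₀ hε, one_smul]
    rw [hid]
    exact Submodule.smul_mem _ _ (Submodule.sub_mem _ hconj hm)
  have hmap : Submodule.map (lmul l) (resSpan w) ≤ M := by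
    rw [resSpan, Submodule.map_span_le]
    exact hgen
  constructor
  · have : lmul l 1 ∈ Submodule.map (lmul l) (resSpan w) :=
      Submodule.mem_map_of_mem (one_mem_resSpan hinf hw)
    rw [lmul_apply, mul_one] at this
    exact hmap this
  · have : lmul l w ∈ Submodule.map (lmul l) (resSpan w) :=
      Submodule.mem_map_of_mem (self_mem_resSpan hinf hw)
    rw [lmul_apply] at this
    exact hmap this

/-! ### Conjugate spans -/

def conjSet (v : D) : Set D := {d | ∃ x : D, x ≠ 0 ∧ d = x * v * x⁻¹}

def conjSpan (v : D) : Submodule (Subring.center D) D :=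
  Submodule.span (Subring.center D) (conjSet v)

lemma self_mem_conjSpan (v : D) : v ∈ conjSpan v :=
  Submodule.subset_span ⟨1, one_ne_zero, by rw [one_mul, inv_one, mul_one]⟩

/-- Conjugation as a linear map. -/
def conjMap (x : D) : D →ₗ[Z] D := (rmul x⁻¹).comp (lmul x)

lemma conjMap_apply (x d : D) : conjMap x d = x * d * x⁻¹ := rfl

lemma conjSpan_invariant (v : D) : IsInvariant (conjSpan v) := by
  intro x hx m hm
  have hmap : Submodule.map (conjMap x) (conjSpan v) ≤ conjSpan v := by
    rw [conjSpan, Submodule.map_span_le]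
    rintro d ⟨y, hy, rfl⟩
    refine Submodule.subset_span ⟨x * y, mul_ne_zero hx hy, ?_⟩
    rw [conjMap_apply, mul_inv_rev]
    noncomm_ring
  have : conjMap x m ∈ Submodule.map (conjMap x) (conjSpan v) :=
    Submodule.mem_map_of_mem hm
  exact hmap (by rwa [conjMap_apply] at this)

lemma conjSpan_le {v : D} {M : Submodule (Subring.center D) D}
    (hM : IsInvariant M) (hv : v ∈ M) : conjSpan v ≤ M := by
  rw [conjSpan, Submodule.span_le]
  rintro d ⟨x, hx, rfl⟩
  exact hM x hx v hv


/-! ### Cartan–Brauer–Hua -/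

omit [Module.Finite (Subring.center D) D] in
/-- Cartan–Brauer–Hua: a subring closed under inverses and invariant under all
inner automorphisms is central or everything. -/
lemma cbh (R : Subring D) (hinv : ∀ x : D, x ≠ 0 → ∀ r ∈ R, x * r * x⁻¹ ∈ R)
    (hdiv : ∀ r ∈ R, r⁻¹ ∈ R) : (R : Set D) ⊆ (Z : Set D) ∨ R = ⊤ := by
  by_cases hR : R = ⊤
  · exact Or.inr hR
  left
  obtain ⟨d₀, hd₀⟩ : ∃ d : D, d ∉ R := by
    by_contra h
    push_neg at h
    exact hR ((Subring.eq_top_iff' R).2 h)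
  have step1 : ∀ d : D, d ∉ R → ∀ k ∈ R, d * k = k * d := by
    intro d hd k hk
    have hd0 : d ≠ 0 := fun h => hd (h ▸ R.zero_mem)
    have hd1 : (1 : D) + d ≠ 0 := by
      intro h
      have : d = -1 := by linear_combination (norm := noncomm_ring) h
      exact hd (this ▸ R.neg_mem R.one_mem)
    set k1 := d * k * d⁻¹ with hk1
    set k2 := (1 + d) * k * (1 + d)⁻¹ with hk2
    have hk1R : k1 ∈ R := hinv d hd0 k hk
    have hk2R : k2 ∈ R := hinv _ hd1 k hk
    have eq1 : d * k = k1 * d := by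
      rw [hk1, mul_assoc, inv_mul_cancel₀ hd0, mul_one]
    have eq2 : (1 + d) * k = k2 * (1 + d) := by
      rw [hk2, mul_assoc, inv_mul_cancel₀ hd1, mul_one]
    have eq3 : (k1 - k2) * d = k2 - k := by
      rw [add_mul, one_mul, mul_add, mul_one, eq1] at eq2
      linear_combination (norm := noncomm_ring) eq2
    by_cases h12 : k1 = k2
    · have hk2k : k2 = k := by
        have : (0:D) = k2 - k := by rw [← eq3, h12, sub_self, zero_mul]
        exact sub_eq_zero.mp this.symm
      rw [eq1, h12, hk2k]
    · exfalso
      apply hd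
      have : d = (k1 - k2)⁻¹ * (k2 - k) := by
        rw [← eq3, ← mul_assoc, inv_mul_cancel₀ (sub_ne_zero.2 h12), one_mul]
      rw [this]
      exact R.mul_mem (hdiv _ (R.sub_mem hk1R hk2R)) (R.sub_mem hk2R hk)
  intro k hk
  rw [SetLike.mem_coe, Subring.mem_center_iff]
  intro g
  by_cases hg : g ∈ R
  · have hgd : g + d₀ ∉ R := by
      intro h
      exact hd₀ (by simpa using R.sub_mem h hg)
    have e1 := step1 _ hgd k hk
    have e2 := step1 _ hd₀ k hk
    have : (g + d₀) * k - d₀ * k = k * (g + d₀) - k * d₀ := by rw [e1, e2]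
    linear_combination (norm := noncomm_ring) this
  · exact step1 g hg k hk

/-! ### The minimal invariant noncentral submodule -/

/-- For every noncentral `v`, a minimal invariant noncentral submodule is
contained in the span of the conjugates of `v`. -/
lemma min_le_conjSpan (hinf : Infinite Z)
    {M : Submodule (Subring.center D) D} (hMinv : IsInvariant M)
    (hMnc : ∃ m ∈ M, m ∉ Z)
    (hMmin : ∀ N : Submodule (Subring.center D) D, IsInvariant N → (∃ m ∈ N, m ∉ Z) →
      Module.finrank (Subring.center D) M ≤ Module.finrank (Subring.center D) N)
    {v : D} (hv : v ∉ Z) : M ≤ conjSpan v := by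
  by_cases hA : ∃ w : D, (w ∈ M ∧ w ∈ conjSpan v) ∧ w ∉ Z
  · obtain ⟨w, ⟨hwM, hwv⟩, hwZ⟩ := hA
    have h1 : conjSpan w ≤ M := conjSpan_le hMinv hwM
    have h2 : conjSpan w ≤ conjSpan v := conjSpan_le (conjSpan_invariant v) hwv
    have h3 : conjSpan w = M := by
      refine Submodule.eq_of_le_of_finrank_le h1 ?_
      exact hMmin (conjSpan w) (conjSpan_invariant w) ⟨w, self_mem_conjSpan w, hwZ⟩
    rw [← h3]
    exact h2
  · exfalso
    push_neg at hA
    by_cases hB : ∃ m ∈ M, ∃ w ∈ conjSpan v, w ∉ Z ∧ w * m - m * w ≠ 0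
    · obtain ⟨m, hm, w, hwv, hwZ, hne⟩ := hB
      set l := w * m - m * w with hldef
      have hmZ : m ∉ Z := by
        intro hmZ
        apply hne
        show w * m - m * w = 0
        rw [Subring.mem_center_iff.1 hmZ w, sub_self]
      have hlM : l ∈ M := (comm_mem hinf hMinv hm hwZ).1
      have hlv : l ∈ conjSpan v := by
        have := (comm_mem hinf (conjSpan_invariant v) hwv hmZ).1
        have h5 : l = -(m * w - w * m) := by rw [hldef]; abel
        rw [h5]
        exact Submodule.neg_mem _ this
      have hlZ : l ∈ Z := hA l ⟨hlM, hlv⟩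
      have hlwM : l * w ∈ M := (comm_mem hinf hMinv hm hwZ).2
      have hl0 : l ≠ 0 := hne
      set lc : Z := ⟨l, hlZ⟩ with hlc
      have hlc0 : lc ≠ 0 := fun h => hl0 (by simpa [hlc] using congrArg Subtype.val h)
      have hwM : w ∈ M := by
        have : lc⁻¹ • (l * w) ∈ M := Submodule.smul_mem _ _ hlwM
        have heq : lc⁻¹ • (l * w) = w := by
          rw [csmul_def, Subring.center.coe_inv, hlc, ← mul_assoc,
            inv_mul_cancel₀ hl0, one_mul]
        rwa [heq] at this
      exact hwZ (hA w ⟨hwM, hwv⟩)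
    · push_neg at hB
      -- every element of conjSpan v commutes with every element of M
      have hcomm : ∀ m ∈ M, ∀ w ∈ conjSpan v, w * m = m * w := by
        intro m hm w hwv
        by_cases hwZ : w ∈ Z
        · exact (Subring.mem_center_iff.1 hwZ m).symm
        · have := hB m hm w hwv hwZ
          linear_combination (norm := noncomm_ring) this
      set C := Subring.centralizer (M : Set D) with hC
      have hvC : v ∈ C := by
        rw [hC, Subring.mem_centralizer_iff]
        intro g hg
        exact (hcomm g hg v (self_mem_conjSpan v)).symm
      have hCinv : ∀ x : D, x ≠ 0 → ∀ r ∈ C, x * r * x⁻¹ ∈ C := by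
        intro x hx r hr
        rw [hC, Subring.mem_centralizer_iff]
        intro g hg
        have hg' : x⁻¹ * g * x ∈ M := by
          have := hMinv x⁻¹ (inv_ne_zero hx) g hg
          rwa [inv_inv] at this
        have hcr : (x⁻¹ * g * x) * r = r * (x⁻¹ * g * x) :=
          Subring.mem_centralizer_iff.1 hr _ hg'
        have key : x * ((x⁻¹ * g * x) * r) * x⁻¹ = g * (x * r * x⁻¹) := by
          rw [show x * ((x⁻¹ * g * x) * r) * x⁻¹ = (x * x⁻¹) * g * (x * r * x⁻¹) by
            noncomm_ring, mul_inv_cancel₀ hx, one_mul]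
        have key2 : x * (r * (x⁻¹ * g * x)) * x⁻¹ = (x * r * x⁻¹) * g := by
          rw [show x * (r * (x⁻¹ * g * x)) * x⁻¹ = (x * r * x⁻¹) * g * (x * x⁻¹) by
            noncomm_ring, mul_inv_cancel₀ hx, mul_one]
        calc g * (x * r * x⁻¹) = x * ((x⁻¹ * g * x) * r) * x⁻¹ := key.symm
          _ = x * (r * (x⁻¹ * g * x)) * x⁻¹ := by rw [hcr]
          _ = (x * r * x⁻¹) * g := key2
      have hCdiv : ∀ r ∈ C, r⁻¹ ∈ C := by
        intro r hr
        rw [hC, Subring.mem_centralizer_iff]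
        intro g hg
        have : Commute g r := Subring.mem_centralizer_iff.1 hr g hg
        exact this.inv_right₀
      obtain ⟨m₀, hm₀M, hm₀Z⟩ := hMnc
      rcases cbh C hCinv hCdiv with h | h
      · exact hv (h hvC)
      · apply hm₀Z
        rw [Subring.mem_center_iff]
        intro g
        have hgC : g ∈ C := by rw [h]; trivial
        exact (Subring.mem_centralizer_iff.1 hgC m₀ hm₀M).symm


/-- Existence of a minimal invariant noncentral submodule. -/
lemma exists_min (hnc : ∃ w : D, w ∉ Z) :
    ∃ M : Submodule (Subring.center D) D, IsInvariant M ∧ (∃ m ∈ M, m ∉ Z) ∧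
      ∀ N : Submodule (Subring.center D) D, IsInvariant N → (∃ m ∈ N, m ∉ Z) →
        Module.finrank (Subring.center D) M ≤ Module.finrank (Subring.center D) N := by
  classical
  obtain ⟨w, hw⟩ := hnc
  set P : Submodule (Subring.center D) D → Prop :=
    fun N => IsInvariant N ∧ ∃ m ∈ N, m ∉ Z with hP
  set s : Set ℕ := {n | ∃ N, P N ∧ Module.finrank (Subring.center D) N = n} with hs
  have hsne : s.Nonempty := by
    refine ⟨Module.finrank (Subring.center D) (⊤ : Submodule (Subring.center D) D),
      ⊤, ⟨?_, ⟨w, trivial, hw⟩⟩, rfl⟩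
    intro x hx m _
    trivial
  obtain ⟨N, ⟨hN1, hN2⟩, hNr⟩ := Nat.sInf_mem hsne
  refine ⟨N, hN1, hN2, fun N' hN'1 hN'2 => ?_⟩
  rw [hNr]
  exact Nat.sInf_le ⟨N', ⟨hN'1, hN'2⟩, rfl⟩

omit [Module.Finite (Subring.center D) D] in
lemma center_infinite (hnc : ∃ w : D, w ∉ Z) [Module.Finite (Subring.center D) D] :
    Infinite Z := by
  by_contra hfin
  rw [not_infinite_iff_finite] at hfin
  have : Finite D := Module.finite_of_finite (Subring.center D)
  obtain ⟨w, hw⟩ := hnc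
  apply hw
  letI : Field D := littleWedderburn D
  rw [Subring.mem_center_iff]
  intro g
  exact mul_comm g w

theorem main :
    Submodule.span (Subring.center D)
      {z : D | ∃ x y : D, x ≠ 0 ∧ y ≠ 0 ∧ z = x * y * x⁻¹ * y⁻¹} = ⊤ := by
  classical
  set S : Set D := {z : D | ∃ x y : D, x ≠ 0 ∧ y ≠ 0 ∧ z = x * y * x⁻¹ * y⁻¹} with hSdef
  have h1S : (1 : D) ∈ S := ⟨1, 1, one_ne_zero, one_ne_zero, by
    rw [one_mul, inv_one, one_mul, mul_one]⟩
  by_cases hcomm : ∀ d : D, d ∈ Z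
  · rw [Submodule.eq_top_iff']
    intro d
    have : (⟨d, hcomm d⟩ : Z) • (1 : D) = d := by rw [csmul_def, mul_one]
    rw [← this]
    exact Submodule.smul_mem _ _ (Submodule.subset_span h1S)
  · push_neg at hcomm
    have hinf : Infinite Z := center_infinite hcomm
    obtain ⟨M, hMinv, hMnc, hMmin⟩ := exists_min hcomm
    obtain ⟨z₀, hz₀M, hz₀Z⟩ := hMnc
    have hz₀0 : z₀ ≠ 0 := noncentral_ne_zero hz₀Z
    obtain ⟨w₀, hw₀⟩ := hcomm
    -- z₀ * u ∈ span S for every noncentral u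
    have key : ∀ u : D, u ∉ Z → z₀ * u ∈ Submodule.span (Subring.center D) S := by
      intro u hu
      have hu0 : u ≠ 0 := noncentral_ne_zero hu
      have hv : u⁻¹ ∉ Z := inv_noncentral hu
      have hz₀v : z₀ ∈ conjSpan u⁻¹ :=
        min_le_conjSpan hinf hMinv ⟨z₀, hz₀M, hz₀Z⟩ hMmin hv hz₀M
      have hmap : Submodule.map (rmul u) (conjSpan u⁻¹) ≤
          Submodule.span (Subring.center D) S := by
        rw [conjSpan, Submodule.map_span_le]
        rintro d ⟨x, hx, rfl⟩
        refine Submodule.subset_span ⟨x, u⁻¹, hx, inv_ne_zero hu0, ?_⟩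
        rw [rmul_apply, inv_inv]
      have : rmul u z₀ ∈ Submodule.map (rmul u) (conjSpan u⁻¹) :=
        Submodule.mem_map_of_mem hz₀v
      rw [rmul_apply] at this
      exact hmap this
    have key2 : ∀ d : D, z₀ * d ∈ Submodule.span (Subring.center D) S := by
      intro d
      by_cases hd : d ∈ Z
      · have hdw : d + w₀ ∉ Z := by
          intro h
          exact hw₀ (by simpa using Subring.sub_mem _ h hd)
        have e : z₀ * d = z₀ * (d + w₀) - z₀ * w₀ := by noncomm_ring
        rw [e]
        exact Submodule.sub_mem _ (key _ hdw) (key _ hw₀)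
      · exact key d hd
    rw [Submodule.eq_top_iff']
    intro e
    have : z₀ * (z₀⁻¹ * e) = e := by
      rw [← mul_assoc, mul_inv_cancel₀ hz₀0, one_mul]
    rw [← this]
    exact key2 _

end Stmt11

/-- A centrally finite division ring is spanned over its centre by its multiplicative
commutators: `T(D) = D`. -/
theorem stmt_11 (D : Type*) [DivisionRing D]
    [Module.Finite (Subring.center D) D] :
    Submodule.span (Subring.center D)
      {z : D | ∃ x y : D, x ≠ 0 ∧ y ≠ 0 ∧ z = x * y * x⁻¹ * y⁻¹} = ⊤ :=
  Stmt11.main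
end

section
/- Let D be a division ring with center F, let x ∈ T(D), and let a ∈ D be algebraic over F with ax ≠ xa. Assume F is infinite. Then (axa⁻¹ − x)·F(a) ⊆ T(D); in particular, ax − xa = (axa⁻¹ − x)a ∈ T(D). -/
open Polynomial

set_option maxHeartbeats 1000000 in
/-- If `F` is infinite, `x ∈ T(D)`, and `a` is algebraic over `F` with `ax ≠ xa`, then
`(axa⁻¹ - x)·F(a) ⊆ T(D)`; in particular `ax - xa ∈ T(D)`. -/
theorem stmt_14 (D : Type*) [DivisionRing D] [Infinite (Subring.center D)]
    (T : Submodule (Subring.center D) D)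
    (hT : T = Submodule.span (Subring.center D)
      {z : D | ∃ x y : D, x ≠ 0 ∧ y ≠ 0 ∧ z = x * y * x⁻¹ * y⁻¹})
    (x : D) (hx : x ∈ T) (a : D) (halg : IsAlgebraic (Subring.center D) a)
    (hcomm : a * x ≠ x * a) :
    (∀ c ∈ Algebra.adjoin (Subring.center D) ({a} : Set D),
        (a * x * a⁻¹ - x) * c ∈ T) ∧
      a * x - x * a ∈ T := by
  have ha0 : a ≠ 0 := by rintro rfl; simp at hcomm
  have hcent : ∀ (e : Subring.center D) (y : D),
      algebraMap (Subring.center D) D e * y = y * algebraMap (Subring.center D) D e :=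
    fun e y => Algebra.commutes e y
  have hanc : ∀ e : Subring.center D, a - algebraMap (Subring.center D) D e ≠ 0 := by
    intro e he
    apply hcomm
    have ha : a = algebraMap (Subring.center D) D e := sub_eq_zero.mp he
    rw [ha, hcent]
  -- conjugation invariance of T
  have hconj : ∀ d : D, d ≠ 0 → ∀ z, z ∈ T → d * z * d⁻¹ ∈ T := by
    intro d hd z hz
    rw [hT] at hz ⊢
    induction hz using Submodule.span_induction with
    | mem y hy =>
      obtain ⟨u, v, hu, hv, rfl⟩ := hy
      apply Submodule.subset_span
      refine ⟨d * u * d⁻¹, d * v * d⁻¹,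
        mul_ne_zero (mul_ne_zero hd hu) (inv_ne_zero hd),
        mul_ne_zero (mul_ne_zero hd hv) (inv_ne_zero hd), ?_⟩
      simp [mul_inv_rev, inv_inv, mul_assoc, inv_mul_cancel_left₀ hd]
    | zero => simpa using Submodule.zero_mem _
    | add p q hp hq ihp ihq =>
      have : d * (p + q) * d⁻¹ = d * p * d⁻¹ + d * q * d⁻¹ := by
        rw [mul_add, add_mul]
      rw [this]; exact Submodule.add_mem _ ihp ihq
    | smul c p hp ihp =>
      have : d * (c • p) * d⁻¹ = c • (d * p * d⁻¹) := by
        rw [Algebra.smul_def, Algebra.smul_def]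
        simp only [← mul_assoc]
        rw [← hcent]
      rw [this]; exact Submodule.smul_mem _ _ ihp
  set w := a * x - x * a with hw
  -- key: w * (a - e)⁻¹ ∈ T for all central e
  have key : ∀ e : Subring.center D,
      w * (a - algebraMap (Subring.center D) D e)⁻¹ ∈ T := by
    intro e
    have hb := hanc e
    have h1 : (a - algebraMap (Subring.center D) D e) * x *
        (a - algebraMap (Subring.center D) D e)⁻¹ - x ∈ T :=
      sub_mem (hconj _ hb x hx) hx
    have h3 : w = (a - algebraMap (Subring.center D) D e) * x -
        x * (a - algebraMap (Subring.center D) D e) := by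
      rw [sub_mul, mul_sub, hcent e x, hw]
      exact (sub_sub_sub_cancel_right _ _ _).symm
    have h2 : w * (a - algebraMap (Subring.center D) D e)⁻¹ =
        (a - algebraMap (Subring.center D) D e) * x *
          (a - algebraMap (Subring.center D) D e)⁻¹ - x := by
      rw [h3, sub_mul, mul_inv_cancel_right₀ hb]
    rw [h2]; exact h1
  have hint : IsIntegral (Subring.center D) a := halg.isIntegral
  have hmonic : (minpoly (Subring.center D) a).Monic := minpoly.monic hint
  have hNpos : 0 < (minpoly (Subring.center D) a).natDegree := minpoly.natDegree_pos hint
  -- everything aeval'd at a commutes with a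
  have hcomaev : ∀ p : Polynomial (Subring.center D), a * aeval a p = aeval a p * a := by
    intro p
    calc a * aeval a p = aeval a (X * p) := by rw [map_mul, aeval_X]
      _ = aeval a (p * X) := by rw [mul_comm]
      _ = aeval a p * a := by rw [map_mul, aeval_X]
  set N := (minpoly (Subring.center D) a).natDegree with hN
  let v : Fin N → Subring.center D := fun i => Infinite.natEmbedding (Subring.center D) i.1
  have hvinj : Function.Injective v := fun i j h =>
    Fin.val_injective ((Infinite.natEmbedding (Subring.center D)).injective h)
  have hQne : ∀ t : Finset (Fin N), aeval a (∏ j ∈ t, (X - C (v j))) ≠ 0 := by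
    intro t
    induction t using Finset.induction_on with
    | empty => simp
    | insert _ _ hj ih =>
      rw [Finset.prod_insert hj, map_mul]
      refine mul_ne_zero ?_ ih
      rw [map_sub, aeval_X, aeval_C]
      exact hanc _
  -- powers lemma
  have hCpow : ∀ k, k < N → w * a ^ k ∈ T := by
    intro k hk
    have hdg : ((X ^ k * ∏ j : Fin N, (X - C (v j))) %ₘ minpoly (Subring.center D) a).degree
        < ((Finset.univ : Finset (Fin N)).card : WithBot ℕ) := by
      have h1 := degree_modByMonic_lt (X ^ k * ∏ j : Fin N, (X - C (v j))) hmonic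
      rw [(minpoly (Subring.center D) a).degree_eq_natDegree (minpoly.ne_zero hint)] at h1
      rwa [Finset.card_univ, Fintype.card_fin]
    have hvs : Set.InjOn v ↑(Finset.univ : Finset (Fin N)) := hvinj.injOn
    have hginterp := Lagrange.eq_interpolate hvs hdg
    have hQrel : ∀ i : Fin N, aeval a (∏ j : Fin N, (X - C (v j))) =
        aeval a (∏ j ∈ Finset.univ.erase i, (X - C (v j))) *
          (a - algebraMap (Subring.center D) D (v i)) := by
      intro i
      conv_lhs => rw [← Finset.prod_erase_mul Finset.univ _ (Finset.mem_univ i)]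
      rw [map_mul, map_sub, aeval_X, aeval_C]
    have haevalg : aeval a ((X ^ k * ∏ j : Fin N, (X - C (v j))) %ₘ minpoly (Subring.center D) a)
        = a ^ k * aeval a (∏ j : Fin N, (X - C (v j))) := by
      have h2 := modByMonic_add_div (X ^ k * ∏ j : Fin N, (X - C (v j))) (minpoly (Subring.center D) a)
      calc aeval a ((X ^ k * ∏ j : Fin N, (X - C (v j))) %ₘ minpoly (Subring.center D) a)
          = aeval a ((X ^ k * ∏ j : Fin N, (X - C (v j))) %ₘ minpoly (Subring.center D) a)
            + aeval a (minpoly (Subring.center D) a) *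
              aeval a ((X ^ k * ∏ j : Fin N, (X - C (v j))) /ₘ minpoly (Subring.center D) a) := by
            rw [minpoly.aeval, zero_mul, add_zero]
        _ = aeval a (X ^ k * ∏ j : Fin N, (X - C (v j))) := by
            rw [← map_mul, ← map_add, h2]
        _ = a ^ k * aeval a (∏ j : Fin N, (X - C (v j))) := by
            rw [map_mul, map_pow, aeval_X]
    have hbasis : ∀ i : Fin N, aeval a (Lagrange.basis Finset.univ v i)
        = algebraMap (Subring.center D) D (∏ j ∈ Finset.univ.erase i, (v i - v j)⁻¹) *
          aeval a (∏ j ∈ Finset.univ.erase i, (X - C (v j))) := by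
      intro i
      rw [Lagrange.basis]
      rw [show (∏ j ∈ Finset.univ.erase i, Lagrange.basisDivisor (v i) (v j))
            = C (∏ j ∈ Finset.univ.erase i, (v i - v j)⁻¹) *
              ∏ j ∈ Finset.univ.erase i, (X - C (v j)) by
        rw [map_prod, ← Finset.prod_mul_distrib]
        exact Finset.prod_congr rfl fun j _ => rfl]
      rw [map_mul, aeval_C]
    have hsum : aeval a ((X ^ k * ∏ j : Fin N, (X - C (v j))) %ₘ minpoly (Subring.center D) a)
        = ∑ i : Fin N,
            ((((X ^ k * ∏ j : Fin N, (X - C (v j))) %ₘ minpoly (Subring.center D) a).eval (v i))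
              * ∏ j ∈ Finset.univ.erase i, (v i - v j)⁻¹) •
              aeval a (∏ j ∈ Finset.univ.erase i, (X - C (v j))) := by
      conv_lhs => rw [hginterp]
      rw [Lagrange.interpolate_apply, map_sum]
      refine Finset.sum_congr rfl fun i _ => ?_
      rw [map_mul, aeval_C, hbasis i, Algebra.smul_def, map_mul, mul_assoc]
    have hfin : w * a ^ k = ∑ i : Fin N,
        ((((X ^ k * ∏ j : Fin N, (X - C (v j))) %ₘ minpoly (Subring.center D) a).eval (v i))
          * ∏ j ∈ Finset.univ.erase i, (v i - v j)⁻¹) •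
          (w * (a - algebraMap (Subring.center D) D (v i))⁻¹) := by
      have hQP := hQne Finset.univ
      have h1 : a ^ k = aeval a ((X ^ k * ∏ j : Fin N, (X - C (v j))) %ₘ
          minpoly (Subring.center D) a) * (aeval a (∏ j : Fin N, (X - C (v j))))⁻¹ := by
        rw [haevalg, mul_assoc, mul_inv_cancel₀ hQP, mul_one]
      rw [h1, hsum, Finset.sum_mul, Finset.mul_sum]
      refine Finset.sum_congr rfl fun i _ => ?_
      rw [smul_mul_assoc, mul_smul_comm]
      congr 2
      have hcom : Commute (a - algebraMap (Subring.center D) D (v i))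
          (aeval a (∏ j ∈ Finset.univ.erase i, (X - C (v j)))) := by
        have hc1 : Commute a (aeval a (∏ j ∈ Finset.univ.erase i, (X - C (v j)))) := hcomaev _
        have hc2 : Commute (algebraMap (Subring.center D) D (v i))
            (aeval a (∏ j ∈ Finset.univ.erase i, (X - C (v j)))) := Algebra.commutes _ _
        exact hc1.sub_left hc2
      rw [hQrel i, mul_inv_rev, ← mul_assoc, ← hcom.inv_left₀.eq, mul_assoc,
        mul_inv_cancel₀ (hQne _), mul_one]
    rw [hfin]
    exact Submodule.sum_mem _ fun i _ => Submodule.smul_mem _ _ (key (v i))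
  -- core: w * u ∈ T for all u in the adjoin
  have hcore : ∀ u ∈ Algebra.adjoin (Subring.center D) ({a} : Set D), w * u ∈ T := by
    intro u hu
    rw [Algebra.adjoin_singleton_eq_range_aeval] at hu
    rw [AlgHom.mem_range] at hu
    obtain ⟨p, rfl⟩ := hu
    have hmne1 : minpoly (Subring.center D) a ≠ 1 := by
      intro h; rw [hN, h] at hNpos; simp at hNpos
    have h1 : aeval a p = aeval a (p %ₘ minpoly (Subring.center D) a) := by
      conv_lhs => rw [← modByMonic_add_div p (minpoly (Subring.center D) a)]
      rw [map_add, map_mul, minpoly.aeval, zero_mul, add_zero]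
    have h2 : (p %ₘ minpoly (Subring.center D) a).natDegree < N :=
      natDegree_modByMonic_lt p hmonic hmne1
    rw [h1, aeval_eq_sum_range' h2, Finset.mul_sum]
    exact Submodule.sum_mem _ fun i hi => by
      rw [mul_smul_comm]
      exact Submodule.smul_mem _ _ (hCpow i (Finset.mem_range.mp hi))
  -- a⁻¹ lies in the adjoin
  have hainv : a⁻¹ ∈ Algebra.adjoin (Subring.center D) ({a} : Set D) := by
    have h0 : (minpoly (Subring.center D) a).coeff 0 ≠ 0 :=
      minpoly.coeff_zero_ne_zero hint ha0
    have hdiv : aeval a (minpoly (Subring.center D) a).divX ∈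
        Algebra.adjoin (Subring.center D) ({a} : Set D) := by
      rw [Algebra.adjoin_singleton_eq_range_aeval]
      exact ⟨(minpoly (Subring.center D) a).divX, rfl⟩
    have h2 : a * aeval a (minpoly (Subring.center D) a).divX +
        algebraMap (Subring.center D) D ((minpoly (Subring.center D) a).coeff 0) = 0 := by
      calc a * aeval a (minpoly (Subring.center D) a).divX +
            algebraMap (Subring.center D) D ((minpoly (Subring.center D) a).coeff 0)
          = aeval a (X * (minpoly (Subring.center D) a).divX +
              C ((minpoly (Subring.center D) a).coeff 0)) := by
            rw [map_add, map_mul, aeval_X, aeval_C]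
        _ = aeval a (minpoly (Subring.center D) a) := by rw [X_mul_divX_add]
        _ = 0 := minpoly.aeval _ a
    have h3 : a * aeval a (minpoly (Subring.center D) a).divX =
        -(algebraMap (Subring.center D) D ((minpoly (Subring.center D) a).coeff 0)) :=
      eq_neg_of_add_eq_zero_left h2
    have h1 : a * ((-(minpoly (Subring.center D) a).coeff 0)⁻¹ •
        aeval a (minpoly (Subring.center D) a).divX) = 1 := by
      rw [mul_smul_comm, h3, inv_neg, neg_smul, smul_neg, neg_neg,
        Algebra.smul_def, ← map_mul, inv_mul_cancel₀ h0, map_one]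
    rw [inv_eq_of_mul_eq_one_right h1]
    exact Subalgebra.smul_mem _ hdiv _
  refine ⟨?_, by simpa using hcore 1 (one_mem _)⟩
  intro c hc
  have h1 : (a * x * a⁻¹ - x) * c = w * (a⁻¹ * c) := by
    rw [← mul_assoc]
    congr 1
    rw [hw, sub_mul, mul_inv_cancel_right₀ ha0]
  rw [h1]
  exact hcore _ (mul_mem hainv hc)
end

section
/- Let D be a division ring with center F. If dim_F T(D) is finite, then dim_F D is finite. -/
namespace Stmt16

variable {D : Type*} [DivisionRing D]

/-- The set of multiplicative commutators. -/
def S (D : Type*) [DivisionRing D] : Set D :=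
  {z : D | ∃ x y : D, x ≠ 0 ∧ y ≠ 0 ∧ z = x * y * x⁻¹ * y⁻¹}

lemma one_mem_S : (1 : D) ∈ S D := ⟨1, 1, one_ne_zero, one_ne_zero, by simp⟩

lemma conj_mul_conj (u a b : D) (hu : u ≠ 0) :
    (u * a * u⁻¹) * (u * b * u⁻¹) = u * (a * b) * u⁻¹ := by
  simp only [mul_assoc, inv_mul_cancel_left₀ hu]

lemma conj_inv (u a : D) : u * a⁻¹ * u⁻¹ = (u * a * u⁻¹)⁻¹ := by
  simp [mul_inv_rev, mul_assoc]

lemma conj_mem_S {s : D} (hs : s ∈ S D) {u : D} (hu : u ≠ 0) : u * s * u⁻¹ ∈ S D := by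
  obtain ⟨x, y, hx, hy, rfl⟩ := hs
  refine ⟨u * x * u⁻¹, u * y * u⁻¹,
    mul_ne_zero (mul_ne_zero hu hx) (inv_ne_zero hu),
    mul_ne_zero (mul_ne_zero hu hy) (inv_ne_zero hu), ?_⟩
  rw [← conj_inv u x, ← conj_inv u y, conj_mul_conj _ _ _ hu, conj_mul_conj _ _ _ hu,
    conj_mul_conj _ _ _ hu]

/-- The span of the commutators. -/
noncomputable def Tsp (D : Type*) [DivisionRing D] : Submodule (Subring.center D) D :=
  Submodule.span (Subring.center D) (S D)

lemma one_mem_Tsp : (1 : D) ∈ Tsp D := Submodule.subset_span one_mem_S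

lemma conj_mem_Tsp {t : D} (ht : t ∈ Tsp D) {u : D} (hu : u ≠ 0) : u * t * u⁻¹ ∈ Tsp D := by
  induction ht using Submodule.span_induction with
  | mem x hx => exact Submodule.subset_span (conj_mem_S hx hu)
  | zero => simpa using (Tsp D).zero_mem
  | add x y hx hy hx' hy' =>
      have : u * (x + y) * u⁻¹ = u * x * u⁻¹ + u * y * u⁻¹ := by
        rw [mul_add, add_mul]
      rw [this]; exact add_mem hx' hy'
  | smul c x hx hx' =>
      have hc := Subring.mem_center_iff.mp c.2
      have : u * (c • x) * u⁻¹ = c • (u * x * u⁻¹) := by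
        show u * ((c : D) * x) * u⁻¹ = (c : D) * (u * x * u⁻¹)
        rw [← mul_assoc, hc u, mul_assoc, mul_assoc, mul_assoc]
      rw [this]; exact Submodule.smul_mem _ _ hx'

/-- An element commuting with all multiplicative commutators is central. -/
lemma mem_center_of_commutators {x : D} (h : ∀ s ∈ S D, x * s = s * x) :
    x ∈ Subring.center D := by
  rw [Subring.mem_center_iff]
  intro r
  by_contra hrx
  have hx0 : x ≠ 0 := fun h0 => hrx (by simp [h0])
  have hr0 : r ≠ 0 := fun h0 => hrx (by simp [h0])
  have hr1 : (1 : D) + r ≠ 0 := by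
    intro h1
    have : r = -1 := eq_neg_of_add_eq_zero_right h1
    exact hrx (by simp [this])
  have hconj : ∀ w : D, w ≠ 0 → Commute x (w * x * w⁻¹) := by
    intro w hw
    have hs : w * x * w⁻¹ * x⁻¹ ∈ S D := ⟨w, x, hw, hx0, rfl⟩
    have h1 : x * (w * x * w⁻¹ * x⁻¹) = (w * x * w⁻¹ * x⁻¹) * x := h _ hs
    have e : w * x * w⁻¹ = (w * x * w⁻¹ * x⁻¹) * x := by
      rw [mul_assoc (w * x * w⁻¹), inv_mul_cancel₀ hx0, mul_one]
    show x * (w * x * w⁻¹) = (w * x * w⁻¹) * x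
    rw [e, ← mul_assoc, h1, mul_assoc, mul_assoc]
  set n₁ := r * x * r⁻¹ with hn₁def
  set n₂ := (1 + r) * x * (1 + r)⁻¹ with hn₂def
  have hn₁ : Commute x n₁ := hconj r hr0
  have hn₂ : Commute x n₂ := hconj _ hr1
  have e1 : n₁ * r = r * x := by
    rw [hn₁def, mul_assoc (r * x), inv_mul_cancel₀ hr0, mul_one]
  have e2 : n₂ * (1 + r) = (1 + r) * x := by
    rw [hn₂def, mul_assoc ((1 + r) * x), inv_mul_cancel₀ hr1, mul_one]
  have e3 : n₂ + n₂ * r = x + r * x := by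
    rw [mul_add, add_mul, one_mul, mul_one] at e2; exact e2
  have key : (n₁ - n₂) * r = n₂ - x := by
    have e4 : n₂ * r = x + r * x - n₂ := eq_sub_of_add_eq' e3
    rw [sub_mul, e1, e4]; abel
  have hm0 : n₁ - n₂ ≠ 0 := by
    intro hm
    have h5 : n₂ = x := by
      have : n₂ - x = 0 := by rw [← key, hm, zero_mul]
      exact sub_eq_zero.mp this
    rw [h5] at e2
    apply hrx
    have : x + x * r = x + r * x := by
      rw [mul_add, add_mul, one_mul, mul_one] at e2; exact e2
    exact (add_left_cancel this).symm
  have hre : r = (n₁ - n₂)⁻¹ * (n₂ - x) := by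
    rw [← key, ← mul_assoc, inv_mul_cancel₀ hm0, one_mul]
  have hc : Commute x r := by
    rw [hre]
    exact ((hn₁.sub_right hn₂).inv_right₀).mul_right (hn₂.sub_right (Commute.refl x))
  exact hrx hc.symm

/-- Hua-type expression: every non-central element is `m⁻¹ * u` with `m, u` in the span. -/
lemma exists_mu {x : D} (hx : x ∉ Subring.center D) :
    ∃ m u : D, m ∈ Tsp D ∧ u ∈ Tsp D ∧ m ≠ 0 ∧ m * x = u := by
  have hns : ¬∀ s ∈ S D, x * s = s * x := fun h => hx (mem_center_of_commutators h)
  push_neg at hns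
  obtain ⟨s, hsS, hxs⟩ := hns
  have hx0 : x ≠ 0 := by rintro rfl; exact hx (Subring.zero_mem _)
  have hx1 : (1 : D) + x ≠ 0 := by
    intro h1
    have : x = -1 := eq_neg_of_add_eq_zero_right h1
    exact hx (this ▸ Subring.neg_mem _ (Subring.one_mem _))
  have hs0 : s ≠ 0 := fun h0 => hxs (by simp [h0])
  set n₁ := x * s * x⁻¹ with hn₁def
  set n₂ := (1 + x) * s * (1 + x)⁻¹ with hn₂def
  have hn₁T : n₁ ∈ Tsp D := conj_mem_Tsp (Submodule.subset_span hsS) hx0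
  have hn₂T : n₂ ∈ Tsp D := conj_mem_Tsp (Submodule.subset_span hsS) hx1
  have e1 : n₁ * x = x * s := by
    rw [hn₁def, mul_assoc (x * s), inv_mul_cancel₀ hx0, mul_one]
  have e2 : n₂ * (1 + x) = (1 + x) * s := by
    rw [hn₂def, mul_assoc ((1 + x) * s), inv_mul_cancel₀ hx1, mul_one]
  have e3 : n₂ + n₂ * x = s + x * s := by
    rw [mul_add, add_mul, one_mul, mul_one] at e2; exact e2
  have key : (n₁ - n₂) * x = n₂ - s := by
    have e4 : n₂ * x = s + x * s - n₂ := eq_sub_of_add_eq' e3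
    rw [sub_mul, e1, e4]; abel
  have hm0 : n₁ - n₂ ≠ 0 := by
    intro hm
    have h5 : n₂ = s := by
      have : n₂ - s = 0 := by rw [← key, hm, zero_mul]
      exact sub_eq_zero.mp this
    rw [h5] at e2
    apply hxs
    have : s + s * x = s + x * s := by
      rw [mul_add, add_mul, one_mul, mul_one] at e2; exact e2
    exact (add_left_cancel this).symm
  exact ⟨n₁ - n₂, n₂ - s, sub_mem hn₁T hn₂T, sub_mem hn₂T (Submodule.subset_span hsS), hm0, key⟩


open Polynomial Finset


lemma inv_mem_span_pow {b : D} (hb : b ≠ 0) :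
    ∀ (N : ℕ) (p : Polynomial (Subring.center D)), p ≠ 0 → p.natDegree ≤ N →
      Polynomial.aeval b p = 0 →
      b⁻¹ ∈ Submodule.span (Subring.center D) ((b ^ ·) '' Set.Iio N) := by
  intro N
  induction N with
  | zero =>
      intro p hp hdeg h0
      exfalso
      have hdeg0 : p.natDegree = 0 := Nat.le_zero.mp hdeg
      have hpc : p = Polynomial.C (p.coeff 0) := Polynomial.eq_C_of_natDegree_eq_zero hdeg0
      have hc : p.coeff 0 ≠ 0 := fun h => hp (by rw [hpc, h, map_zero])
      rw [hpc, Polynomial.aeval_C] at h0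
      exact hc ((algebraMap (Subring.center D) D).injective (by rw [h0, map_zero]))
  | succ n IH =>
      intro p hp hdeg h0
      by_cases hc0 : p.coeff 0 = 0
      · obtain ⟨q, rfl⟩ := Polynomial.X_dvd_iff.mpr hc0
        have hq : q ≠ 0 := fun h => hp (by rw [h, mul_zero])
        have hdq : q.natDegree ≤ n := by
          have := Polynomial.natDegree_mul (p := Polynomial.X) (q := q)
            Polynomial.X_ne_zero hq
          rw [Polynomial.natDegree_X] at this
          omega
        have h0q : Polynomial.aeval b q = 0 := by
          rw [map_mul, Polynomial.aeval_X] at h0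
          exact (mul_eq_zero.mp h0).resolve_left hb
        exact Submodule.span_mono
          (Set.image_mono (Set.Iio_subset_Iio (Nat.le_succ n))) (IH q hq hdq h0q)
      · set N := p.natDegree with hN
        have hsum := Polynomial.aeval_eq_sum_range (p := p) b
        rw [h0] at hsum
        rw [Finset.sum_range_succ'] at hsum
        have hw : b * (∑ i ∈ Finset.range N, p.coeff (i + 1) • b ^ i) = -(p.coeff 0 • 1) := by
          rw [Finset.mul_sum]
          have hterm : ∀ i, b * (p.coeff (i + 1) • b ^ i) = p.coeff (i + 1) • b ^ (i + 1) := by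
            intro i
            rw [Algebra.mul_smul_comm, ← pow_succ']
          simp_rw [hterm]
          rw [pow_zero] at hsum
          exact eq_neg_of_add_eq_zero_left hsum.symm
        set w := ∑ i ∈ Finset.range N, p.coeff (i + 1) • b ^ i with hwdef
        have hbw : b * ((-(p.coeff 0)⁻¹) • w) = 1 := by
          rw [Algebra.mul_smul_comm, hw]
          rw [neg_smul, smul_neg, neg_neg, smul_smul, inv_mul_cancel₀ hc0, one_smul]
        have hbinv : b⁻¹ = (-(p.coeff 0)⁻¹) • w := (eq_inv_of_mul_eq_one_right hbw).symm
        rw [hbinv]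
        apply Submodule.smul_mem
        apply Submodule.sum_mem
        intro i hi
        apply Submodule.smul_mem
        exact Submodule.subset_span ⟨i, lt_of_lt_of_le (Finset.mem_range.mp hi) hdeg, rfl⟩






/-- The key family: for `b ∉ F` and a noncommuting `a`, the elements
`e * (b + λ)⁻¹` all lie in the span of commutators. -/
lemma family_mem {a b : D} (ha : ¬a * b = b * a) (hb : b ∉ Subring.center D)
    (lam : Subring.center D) :
    (a * b * a⁻¹ - b) * (b + (lam : D))⁻¹ ∈ Tsp D := by
  have ha0 : a ≠ 0 := fun h => ha (by simp [h])
  have hb0 : b ≠ 0 := fun h => ha (by simp [h])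
  have hbl : b + (lam : D) ≠ 0 := by
    intro h
    exact hb ((eq_neg_of_add_eq_zero_left h) ▸ Subring.neg_mem _ lam.2)
  have hcomm : a * (lam : D) = (lam : D) * a := Subring.mem_center_iff.mp lam.2 a
  have hSmem : a * (b + (lam : D)) * a⁻¹ * (b + (lam : D))⁻¹ ∈ S D :=
    ⟨a, b + (lam : D), ha0, hbl, rfl⟩
  have hexp : a * (b + (lam : D)) * a⁻¹ = a * b * a⁻¹ + (lam : D) := by
    rw [mul_add, add_mul, hcomm, mul_assoc (lam : D) a a⁻¹, mul_inv_cancel₀ ha0, mul_one]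
  have hident : a * (b + (lam : D)) * a⁻¹ * (b + (lam : D))⁻¹
      = (a * b * a⁻¹ - b) * (b + (lam : D))⁻¹ + 1 := by
    rw [hexp]
    have : a * b * a⁻¹ + (lam : D) = (a * b * a⁻¹ - b) + (b + (lam : D)) := by abel
    rw [this, add_mul, mul_inv_cancel₀ hbl]
  have := sub_mem (Submodule.subset_span hSmem : _ ∈ Tsp D)
    (Submodule.subset_span (one_mem_S) : (1 : D) ∈ Tsp D)
  rw [hident, add_sub_cancel_right] at this
  exact this

lemma exists_annihilator [Infinite (Subring.center D)]
    (hfin : Module.Finite (Subring.center D) (Tsp D)) {b : D} (hb : b ∉ Subring.center D) :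
    ∃ p : Polynomial (Subring.center D), p ≠ 0 ∧
      p.natDegree ≤ Module.finrank (Subring.center D) (Tsp D) ∧ Polynomial.aeval b p = 0 := by
  classical
  set n := Module.finrank (Subring.center D) (Tsp D) with hn
  -- a noncommuting element
  have : ¬∀ g : D, g * b = b * g := fun h => hb (Subring.mem_center_iff.mpr h)
  push_neg at this
  obtain ⟨a, ha⟩ := this
  have ha0 : a ≠ 0 := fun h => ha (by simp [h])
  set e := a * b * a⁻¹ - b with hedef
  have he : e ≠ 0 := by
    rw [hedef, sub_ne_zero]
    intro h
    apply ha
    calc a * b = a * b * a⁻¹ * a := by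
          rw [mul_assoc, inv_mul_cancel₀ ha0, mul_one]
      _ = b * a := by rw [h]
  -- distinct central scalars
  set emb := Infinite.natEmbedding (Subring.center D) with hembdef
  set lam : Fin (n + 1) → Subring.center D := fun i => emb i.val with hlamdef
  have hlaminj : Function.Injective lam := by
    intro i j hij
    exact Fin.val_injective (emb.injective hij)
  set Bden : Fin (n + 1) → D := fun i => b + ((lam i : D)) with hBdef
  have hBne : ∀ i, Bden i ≠ 0 := by
    intro i h
    exact hb ((eq_neg_of_add_eq_zero_left h) ▸ Subring.neg_mem _ (lam i).2)
  have hmem : ∀ i, e * (Bden i)⁻¹ ∈ Tsp D := fun i => family_mem ha hb (lam i)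
  set v : Fin (n + 1) → (Tsp D) := fun i => ⟨e * (Bden i)⁻¹, hmem i⟩ with hvdef
  have hnli : ¬LinearIndependent (Subring.center D) v := by
    intro h
    have := h.fintype_card_le_finrank
    rw [Fintype.card_fin] at this
    omega
  obtain ⟨g, hg0, i₀, hgi⟩ := Fintype.not_linearIndependent_iff.mp hnli
  -- push to D
  have hsumD : ∑ i, g i • (e * (Bden i)⁻¹) = (0 : D) := by
    have := congrArg (Submodule.subtype (Tsp D)) hg0
    simpa [map_sum] using this
  have hfac : e * (∑ i, g i • (Bden i)⁻¹) = 0 := by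
    rw [Finset.mul_sum]
    rw [← hsumD]
    congr 1
    ext i
    rw [Algebra.mul_smul_comm]
  have hS : ∑ i, g i • (Bden i)⁻¹ = (0 : D) := (mul_eq_zero.mp hfac).resolve_left he
  -- the polynomial
  set q : Fin (n + 1) → Polynomial (Subring.center D) :=
    fun i => ∏ j ∈ Finset.univ.erase i, (Polynomial.X + Polynomial.C (lam j)) with hqdef
  set P : Polynomial (Subring.center D) :=
    ∏ j, (Polynomial.X + Polynomial.C (lam j)) with hPdef
  set p : Polynomial (Subring.center D) := ∑ i, Polynomial.C (g i) * q i with hpdef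
  have haevalq : ∀ i, Polynomial.aeval b (q i) = (Bden i)⁻¹ * Polynomial.aeval b P := by
    intro i
    have hPi : P = (Polynomial.X + Polynomial.C (lam i)) * q i :=
      (Finset.mul_prod_erase Finset.univ _ (Finset.mem_univ i)).symm
    have : Polynomial.aeval b P = Bden i * Polynomial.aeval b (q i) := by
      rw [hPi, map_mul, map_add, Polynomial.aeval_X, Polynomial.aeval_C]
      rfl
    rw [this, ← mul_assoc, inv_mul_cancel₀ (hBne i), one_mul]
  have haevalp : Polynomial.aeval b p = 0 := by
    rw [hpdef, map_sum]
    have : ∀ i : Fin (n+1), Polynomial.aeval b (Polynomial.C (g i) * q i)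
        = (g i • (Bden i)⁻¹) * Polynomial.aeval b P := by
      intro i
      rw [map_mul, Polynomial.aeval_C, haevalq i, ← mul_assoc]
      rfl
    rw [Finset.sum_congr rfl (fun i _ => this i), ← Finset.sum_mul, hS, zero_mul]
  have hp0 : p ≠ 0 := by
    intro h
    apply hgi
    have heval := congrArg (Polynomial.eval (-(lam i₀))) h
    rw [hpdef] at heval
    rw [Polynomial.eval_zero, Polynomial.eval_finset_sum] at heval
    rw [Finset.sum_eq_single i₀] at heval
    · rw [Polynomial.eval_mul, Polynomial.eval_C] at heval
      have hq0 : Polynomial.eval (-(lam i₀)) (q i₀) ≠ 0 := by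
        rw [hqdef]
        rw [Polynomial.eval_prod]
        rw [Finset.prod_ne_zero_iff]
        intro j hj
        rw [Polynomial.eval_add, Polynomial.eval_X, Polynomial.eval_C]
        intro hzero
        have : lam j = lam i₀ := by
          have := eq_neg_of_add_eq_zero_right hzero
          rw [neg_neg] at this
          exact this
        exact (Finset.mem_erase.mp hj).1 (hlaminj this)
      exact (mul_eq_zero.mp heval).resolve_right hq0
    · intro i _ hi
      rw [Polynomial.eval_mul]
      apply mul_eq_zero_of_right
      rw [hqdef, Polynomial.eval_prod]
      apply Finset.prod_eq_zero (Finset.mem_erase.mpr ⟨Ne.symm hi, Finset.mem_univ i₀⟩)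
      rw [Polynomial.eval_add, Polynomial.eval_X, Polynomial.eval_C]
      exact neg_add_cancel _
    · intro h'
      exact absurd (Finset.mem_univ i₀) h'
  have hdeg : p.natDegree ≤ n := by
    rw [hpdef]
    apply Polynomial.natDegree_sum_le_of_forall_le
    intro i _
    refine le_trans (Polynomial.natDegree_C_mul_le _ _) ?_
    refine le_trans (Polynomial.natDegree_prod_le _ _) ?_
    have : ∀ j ∈ Finset.univ.erase i,
        (Polynomial.X + Polynomial.C (lam j)).natDegree ≤ 1 := by
      intro j _
      exact le_of_eq (Polynomial.natDegree_X_add_C _)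
    refine le_trans (Finset.sum_le_sum this) ?_
    rw [Finset.sum_const, smul_eq_mul, mul_one]
    rw [Finset.card_erase_of_mem (Finset.mem_univ i), Finset.card_univ, Fintype.card_fin]
    omega
  exact ⟨p, hp0, hdeg, haevalp⟩





/-- When the center is finite (and `Tsp` is a finite module), the division ring is
commutative; so a noncommutative pair yields a contradiction. -/
lemma finite_center_case [Finite (Subring.center D)]
    (hfin : Module.Finite (Subring.center D) (Tsp D))
    {a b : D} (hab : ¬a * b = b * a) : False := by
  classical
  have ha0 : a ≠ 0 := fun h => hab (by simp [h])
  have hb0 : b ≠ 0 := fun h => hab (by simp [h])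
  -- T is a finite set
  have hTfin : Finite (Tsp D) := Module.finite_of_finite (Subring.center D)
  have hTsetfin : (Tsp D : Set D).Finite := Set.finite_coe_iff.mp hTfin
  -- the finite set of possible conjugates of a
  set V : Set D := (fun t => t * a) '' (Tsp D : Set D) with hVdef
  have hVfin : V.Finite := hTsetfin.image _
  have hV : ∀ r : D, r ≠ 0 → r * a * r⁻¹ ∈ V := by
    intro r hr
    have hsm : r * a * r⁻¹ * a⁻¹ ∈ Tsp D := Submodule.subset_span ⟨r, a, hr, ha0, rfl⟩
    have heq : (r * a * r⁻¹ * a⁻¹) * a = r * a * r⁻¹ := by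
      rw [mul_assoc (r * a * r⁻¹) a⁻¹ a, inv_mul_cancel₀ ha0, mul_one]
    exact ⟨_, hsm, heq⟩
  -- the centralizer of a
  set C : Set D := {c : D | c * a = a * c} with hCdef
  have hCzero : (0 : D) ∈ C := by simp [hCdef]
  have hCone : (1 : D) ∈ C := by simp [hCdef]
  have hCmul : ∀ {c d : D}, c ∈ C → d ∈ C → c * d ∈ C := by
    intro c d hc hd
    show c * d * a = a * (c * d)
    rw [mul_assoc, hd, ← mul_assoc, hc, mul_assoc]
  have hCsub : ∀ {c d : D}, c ∈ C → d ∈ C → c - d ∈ C := by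
    intro c d hc hd
    show (c - d) * a = a * (c - d)
    rw [sub_mul, mul_sub, hc, hd]
  have hCneg : ∀ {c : D}, c ∈ C → -c ∈ C := by
    intro c hc
    have := hCsub hCzero hc
    simpa using this
  have hCinv : ∀ {c : D}, c ∈ C → c⁻¹ ∈ C := by
    intro c hc
    rcases eq_or_ne c 0 with rfl | hc0
    · simpa using hCzero
    · show c⁻¹ * a = a * c⁻¹
      have : a * c = c * a := (hc : c * a = a * c).symm
      calc c⁻¹ * a = c⁻¹ * a * c * c⁻¹ := by
            rw [mul_assoc, mul_inv_cancel₀ hc0, mul_one]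
        _ = c⁻¹ * c * a * c⁻¹ := by rw [mul_assoc c⁻¹ a c, this, ← mul_assoc]
        _ = a * c⁻¹ := by rw [inv_mul_cancel₀ hc0, one_mul]
  have hCb : b ∉ C := fun h => hab ((h : b * a = a * b).symm)
  -- key conjugacy fiber fact
  have hfiber : ∀ r r' : D, r ≠ 0 → r' ≠ 0 → r * a * r⁻¹ = r' * a * r'⁻¹ →
      r'⁻¹ * r ∈ C := by
    intro r r' hr hr' hconj
    show r'⁻¹ * r * a = a * (r'⁻¹ * r)
    have h1 : r * a = r' * a * r'⁻¹ * r := by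
      calc r * a = r * a * r⁻¹ * r := by rw [mul_assoc, inv_mul_cancel₀ hr, mul_one]
        _ = r' * a * r'⁻¹ * r := by rw [hconj]
    calc r'⁻¹ * r * a = r'⁻¹ * (r * a) := by rw [mul_assoc]
      _ = r'⁻¹ * (r' * a * r'⁻¹ * r) := by rw [h1]
      _ = r'⁻¹ * r' * a * (r'⁻¹ * r) := by
          simp only [mul_assoc]
      _ = a * (r'⁻¹ * r) := by rw [inv_mul_cancel₀ hr', one_mul]
  by_cases hCfin : C.Finite
  · -- D is finite, hence commutative by Wedderburn: contradiction
    have hDfin : (Set.univ : Set D).Finite := by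
      have hcover : (Set.univ : Set D) ⊆ {0} ∪ ⋃ v ∈ V, {r : D | r ≠ 0 ∧ r * a * r⁻¹ = v} := by
        intro r _
        rcases eq_or_ne r 0 with rfl | hr
        · exact Or.inl rfl
        · exact Or.inr (Set.mem_biUnion (hV r hr) ⟨hr, rfl⟩)
      refine Set.Finite.subset ?_ hcover
      refine (Set.finite_singleton 0).union (Set.Finite.biUnion hVfin ?_)
      intro v _
      rcases Set.eq_empty_or_nonempty {r : D | r ≠ 0 ∧ r * a * r⁻¹ = v} with hemp | ⟨r₀, hr₀⟩
      · rw [hemp]; exact Set.finite_empty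
      · refine Set.Finite.subset (hCfin.image (fun c => r₀ * c)) ?_
        intro r hr
        refine ⟨r₀⁻¹ * r, hfiber r r₀ hr.1 hr₀.1 (hr.2.trans hr₀.2.symm), ?_⟩
        show r₀ * (r₀⁻¹ * r) = r
        rw [← mul_assoc, mul_inv_cancel₀ hr₀.1, one_mul]
    have hfinD : Finite D := Set.finite_univ_iff.mp hDfin
    exact hab ((Finite.isDomain_to_isField D).mul_comm a b)
  · -- C is infinite: build an injection from C into the finite set V
    have hinj : ∀ c ∈ C, ∀ c' ∈ C, (b + c) * a * (b + c)⁻¹ = (b + c') * a * (b + c')⁻¹ →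
        c = c' := by
      intro c hc c' hc' heq
      have hbc : b + c ≠ 0 := by
        intro h
        exact hCb ((eq_neg_of_add_eq_zero_left h) ▸ hCneg hc)
      have hbc' : b + c' ≠ 0 := by
        intro h
        exact hCb ((eq_neg_of_add_eq_zero_left h) ▸ hCneg hc')
      set d := (b + c')⁻¹ * (b + c) with hddef
      have hdC : d ∈ C := hfiber _ _ hbc hbc' heq
      have hbd : (b + c') * d = b + c := by
        rw [hddef, ← mul_assoc, mul_inv_cancel₀ hbc', one_mul]
      rcases eq_or_ne d 1 with hd1 | hd1
      · rw [hd1, mul_one] at hbd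
        exact (add_right_injective b hbd).symm
      · exfalso
        apply hCb
        have h3 : b * d + c' * d = b + c := by rw [← add_mul, hbd]
        have h2 : b * (1 - d) = c' * d - c := by
          rw [mul_sub, mul_one, sub_eq_sub_iff_add_eq_add, ← h3]
          abel
        have h1d : (1 : D) - d ≠ 0 := sub_ne_zero.mpr (Ne.symm hd1)
        have hb_eq : b = (c' * d - c) * (1 - d)⁻¹ := by
          rw [← h2, mul_assoc, mul_inv_cancel₀ h1d, mul_one]
        rw [hb_eq]
        exact hCmul (hCsub (hCmul hc' hdC) hc) (hCinv (hCsub hCone hdC))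
    -- the injection gives finiteness of C
    have himg : (fun c => (b + c) * a * (b + c)⁻¹) '' C ⊆ V := by
      rintro _ ⟨c, hc, rfl⟩
      apply hV
      intro h
      exact hCb ((eq_neg_of_add_eq_zero_left h) ▸ hCneg hc)
    have hCfin' : C.Finite :=
      Set.Finite.of_finite_image (hVfin.subset himg)
        (fun c hc c' hc' h => hinj c hc c' hc' h)
    exact hCfin hCfin'


lemma pow_mono {j k : ℕ} (h : j ≤ k) : (Tsp D) ^ j ≤ (Tsp D) ^ k := by
  induction k with
  | zero => simpa [Nat.le_zero.mp h] using le_rfl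
  | succ k IH =>
      rcases Nat.lt_or_ge j (k+1) with hlt | hge
      · refine le_trans (IH (Nat.lt_succ_iff.mp hlt)) ?_
        intro w hw
        have := Submodule.mul_mem_mul hw one_mem_Tsp
        rw [mul_one] at this
        rw [pow_succ]
        exact this
      · have : j = k + 1 := le_antisymm h hge
        subst this; exact le_rfl

end Stmt16

open Stmt16 in
/-- If `T(D)` is finite-dimensional over the centre `F`, then so is `D`. -/
theorem stmt_16 (D : Type*) [DivisionRing D]
    (T : Submodule (Subring.center D) D)
    (hT : T = Submodule.span (Subring.center D)
      {z : D | ∃ x y : D, x ≠ 0 ∧ y ≠ 0 ∧ z = x * y * x⁻¹ * y⁻¹})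
    (hfin : Module.Finite (Subring.center D) T) :
    Module.Finite (Subring.center D) D := by
  subst hT
  have hfin' : Module.Finite (Subring.center D) (Tsp D) := hfin
  by_cases hcomm : ∀ x y : D, x * y = y * x
  · rw [Module.finite_def]
    refine ⟨{1}, ?_⟩
    rw [eq_top_iff]
    intro x _
    have hx : x ∈ Subring.center D := Subring.mem_center_iff.mpr (fun g => hcomm g x)
    rw [Finset.coe_singleton, Submodule.mem_span_singleton]
    exact ⟨⟨x, hx⟩, by show x * 1 = x; rw [mul_one]⟩
  · push_neg at hcomm
    obtain ⟨a, b, hab⟩ := hcomm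
    cases finite_or_infinite (Subring.center D) with
    | inl hF => exact (finite_center_case hfin' hab).elim
    | inr hF =>
      set n := Module.finrank (Subring.center D) (Tsp D) with hn
      have hTfg : (Tsp D).FG := Module.Finite.iff_fg.mp hfin'
      have hpowfg : ((Tsp D) ^ (n + 1)).FG := hTfg.pow _
      have h1pow : (1 : D) ∈ (Tsp D) ^ (n + 1) := by
        simpa using Submodule.pow_mem_pow (M := Tsp D) one_mem_Tsp (n + 1)
      have htop : (Tsp D) ^ (n + 1) = ⊤ := by
        rw [eq_top_iff]
        intro x _
        by_cases hx : x ∈ Subring.center D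
        · have hsm : (⟨x, hx⟩ : Subring.center D) • (1 : D) = x := by
            show x * 1 = x; rw [mul_one]
          have := Submodule.smul_mem ((Tsp D) ^ (n + 1)) (⟨x, hx⟩ : Subring.center D) h1pow
          rwa [hsm] at this
        · obtain ⟨m, u, hmT, huT, hm0, hmx⟩ := exists_mu hx
          have hxeq : x = m⁻¹ * u := by
            rw [← hmx, ← mul_assoc, inv_mul_cancel₀ hm0, one_mul]
          by_cases hmF : m ∈ Subring.center D
          · have hminv : m⁻¹ ∈ Subring.center D := Set.inv_mem_center hmF
            have hxT : x ∈ Tsp D := by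
              rw [hxeq]
              exact Submodule.smul_mem _ (⟨m⁻¹, hminv⟩ : Subring.center D) huT
            have hle : Tsp D ≤ (Tsp D) ^ (n + 1) := by
              have := pow_mono (D := D) (Nat.le_add_left 1 n)
              rwa [pow_one] at this
            exact hle hxT
          · obtain ⟨p, hp0, hpdeg, hpa⟩ := exists_annihilator hfin' hmF
            have hminv := inv_mem_span_pow hm0 n p hp0 hpdeg hpa
            have hspan_le : Submodule.span (Subring.center D) ((m ^ ·) '' Set.Iio n)
                ≤ (Tsp D) ^ n := by
              rw [Submodule.span_le]
              rintro _ ⟨k, hk, rfl⟩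
              exact pow_mono (le_of_lt hk) (Submodule.pow_mem_pow (Tsp D) hmT k)
            have hmn : m⁻¹ ∈ (Tsp D) ^ n := hspan_le hminv
            rw [hxeq, pow_succ]
            exact Submodule.mul_mem_mul hmn huT
      rw [Module.finite_def]
      exact htop ▸ hpowfg
end
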